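/- arXiv:1303.5025 — 6 statements merged into one kernel-verified Lean document; each statement's English description precedes it below -/
import Mathlib

section
/- Let T be a positivity-preserving bounded linear operator on L²(Q,μ) for a σ-finite measure space (Q,Σ,μ). Then for all nonnegative f, g ∈ L²(Q,μ), the pointwise inequality (Tf)(q)² + (Tg)(q)² ≤ (T(f²+g²)^{1/2})(q)² holds for μ-almost every q ∈ Q. -/
open MeasureTheory Filter Topology

lemma ptw_aux {x y z : ℝ} (hx : 0 ≤ x) (hy : 0 ≤ y) (hz : 0 ≤ z)
    (H : ∀ a b : ℚ, 0 ≤ (a:ℝ) → 0 ≤ (b:ℝ) → (a:ℝ)^2 + (b:ℝ)^2 ≤ 1 →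
      (a:ℝ) * x + (b:ℝ) * y ≤ z) :
    x ^ 2 + y ^ 2 ≤ z ^ 2 := by
  by_cases h0 : x = 0 ∧ y = 0
  · simp [h0.1, h0.2]; positivity
  have hs2 : 0 < x ^ 2 + y ^ 2 := by
    rcases not_and_or.mp h0 with hx0 | hy0 <;> positivity
  set s : ℝ := Real.sqrt (x ^ 2 + y ^ 2) with hsdef
  have hs : 0 < s := Real.sqrt_pos.mpr hs2
  have hss : s ^ 2 = x ^ 2 + y ^ 2 := Real.sq_sqrt hs2.le
  have hzs : s ≤ z := by
    refine le_of_forall_pos_le_add (fun ε hε => ?_)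
    set δ : ℝ := ε / (x + y + 1) with hδdef
    have hδ : 0 < δ := by positivity
    obtain ⟨a, ha1, ha2⟩ := exists_rat_btwn (show x / s - δ < x / s by linarith)
    obtain ⟨b, hb1, hb2⟩ := exists_rat_btwn (show y / s - δ < y / s by linarith)
    set a' : ℚ := max a 0 with ha'def
    set b' : ℚ := max b 0 with hb'def
    have hxs : 0 ≤ x / s := by positivity
    have hys : 0 ≤ y / s := by positivity
    have hca : (a' : ℝ) = max (a : ℝ) 0 := by rw [ha'def]; simp [Rat.cast_max]
    have hcb : (b' : ℝ) = max (b : ℝ) 0 := by rw [hb'def]; simp [Rat.cast_max]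
    have ha'0 : 0 ≤ (a' : ℝ) := by rw [hca]; exact le_max_right _ _
    have hb'0 : 0 ≤ (b' : ℝ) := by rw [hcb]; exact le_max_right _ _
    have ha'le : (a' : ℝ) ≤ x / s := by rw [hca]; exact max_le ha2.le hxs
    have hb'le : (b' : ℝ) ≤ y / s := by rw [hcb]; exact max_le hb2.le hys
    have ha'ge : x / s - δ ≤ (a' : ℝ) := by
      rw [hca]; exact le_trans ha1.le (le_max_left _ _)
    have hb'ge : y / s - δ ≤ (b' : ℝ) := by
      rw [hcb]; exact le_trans hb1.le (le_max_left _ _)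
    have hone : (x / s)^2 + (y / s)^2 = 1 := by
      have : (x / s)^2 + (y / s)^2 = (x^2 + y^2) / s^2 := by ring
      rw [this, ← hss, div_self (by positivity)]
    have hsum : (a' : ℝ)^2 + (b' : ℝ)^2 ≤ 1 := by
      have h1 : (a':ℝ)^2 ≤ (x / s)^2 := pow_le_pow_left₀ ha'0 ha'le 2
      have h2 : (b':ℝ)^2 ≤ (y / s)^2 := pow_le_pow_left₀ hb'0 hb'le 2
      linarith
    have hH := H a' b' ha'0 hb'0 hsum
    have hids : (x / s) * x + (y / s) * y = s := by
      have h1 : (x / s) * x + (y / s) * y = (x^2 + y^2) / s := by ring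
      rw [h1, ← hss, sq, mul_div_assoc, div_self hs.ne', mul_one]
    have hlow : s - δ * (x + y) ≤ (a':ℝ) * x + (b':ℝ) * y := by
      have h1 : (x / s - δ) * x ≤ (a':ℝ) * x := mul_le_mul_of_nonneg_right ha'ge hx
      have h2 : (y / s - δ) * y ≤ (b':ℝ) * y := mul_le_mul_of_nonneg_right hb'ge hy
      nlinarith [hids]
    have hδsmall : δ * (x + y) ≤ ε := by
      rw [hδdef, div_mul_eq_mul_div, div_le_iff₀ (by positivity)]
      nlinarith
    linarith
  calc x ^ 2 + y ^ 2 = s ^ 2 := hss.symm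
    _ ≤ z ^ 2 := pow_le_pow_left₀ hs.le hzs 2

/-- If `T` is a positivity-preserving bounded operator on `L²(Q,μ)` over a
σ-finite measure space, then for all nonnegative `f, g ∈ L²` and any `h ∈ L²` representing
`√(f² + g²)`, one has `(Tf)(q)² + (Tg)(q)² ≤ (Th)(q)²` for μ-a.e. `q`. -/
theorem stmt0 {Q : Type*} [MeasurableSpace Q] (μ : Measure Q) [SigmaFinite μ]
    (T : Lp ℝ 2 μ →L[ℝ] Lp ℝ 2 μ)
    (hT : ∀ u : Lp ℝ 2 μ, 0 ≤ u → 0 ≤ T u)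
    (f g h : Lp ℝ 2 μ) (hf : 0 ≤ f) (hg : 0 ≤ g)
    (hh : (h : Q → ℝ) =ᵐ[μ] fun q => Real.sqrt ((f : Q → ℝ) q ^ 2 + (g : Q → ℝ) q ^ 2)) :
    ∀ᵐ q ∂μ, ((T f : Q → ℝ) q) ^ 2 + ((T g : Q → ℝ) q) ^ 2 ≤ ((T h : Q → ℝ) q) ^ 2 := by
  have hf' : 0 ≤ᵐ[μ] (f : Q → ℝ) := (Lp.coeFn_nonneg _).mpr hf
  have hg' : 0 ≤ᵐ[μ] (g : Q → ℝ) := (Lp.coeFn_nonneg _).mpr hg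
  have hTf0 : 0 ≤ᵐ[μ] (T f : Q → ℝ) := (Lp.coeFn_nonneg _).mpr (hT f hf)
  have hTg0 : 0 ≤ᵐ[μ] (T g : Q → ℝ) := (Lp.coeFn_nonneg _).mpr (hT g hg)
  have hh0 : 0 ≤ h := by
    rw [← Lp.coeFn_nonneg]
    filter_upwards [hh] with q hq
    rw [hq]; exact Real.sqrt_nonneg _
  have hTh0 : 0 ≤ᵐ[μ] (T h : Q → ℝ) := (Lp.coeFn_nonneg _).mpr (hT h hh0)
  -- key inequality for each rational pair
  have key : ∀ a b : ℚ, 0 ≤ (a:ℝ) → 0 ≤ (b:ℝ) → (a:ℝ)^2 + (b:ℝ)^2 ≤ 1 →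
      ∀ᵐ q ∂μ, (a:ℝ) * (T f : Q → ℝ) q + (b:ℝ) * (T g : Q → ℝ) q ≤ (T h : Q → ℝ) q := by
    intro a b ha hb hab
    have hle : (a:ℝ) • f + (b:ℝ) • g ≤ h := by
      rw [← Lp.coeFn_le]
      filter_upwards [Lp.coeFn_add ((a:ℝ) • f) ((b:ℝ) • g), Lp.coeFn_smul (a:ℝ) f,
        Lp.coeFn_smul (b:ℝ) g, hf', hg', hh] with q h1 h2 h3 h4 h5 h6
      rw [h1, Pi.add_apply, h2, h3, Pi.smul_apply, Pi.smul_apply, h6, smul_eq_mul, smul_eq_mul]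
      set x := (f : Q → ℝ) q
      set y := (g : Q → ℝ) q
      have hs0 : 0 ≤ Real.sqrt (x ^ 2 + y ^ 2) := Real.sqrt_nonneg _
      have hs2 : Real.sqrt (x ^ 2 + y ^ 2) ^ 2 = x ^ 2 + y ^ 2 :=
        Real.sq_sqrt (by positivity)
      nlinarith [sq_nonneg ((a:ℝ) * y - (b:ℝ) * x), mul_nonneg ha h4, mul_nonneg hb h5,
        mul_nonneg (mul_nonneg ha h4) hs0, mul_nonneg (mul_nonneg hb h5) hs0]
    have hTle : (a:ℝ) • T f + (b:ℝ) • T g ≤ T h := by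
      have h1 : 0 ≤ T (h - ((a:ℝ) • f + (b:ℝ) • g)) :=
        hT _ (sub_nonneg.mpr hle)
      rw [map_sub, map_add, T.map_smul, T.map_smul, sub_nonneg] at h1
      exact h1
    have := (Lp.coeFn_le _ _).mpr hTle
    filter_upwards [this, Lp.coeFn_add ((a:ℝ) • T f) ((b:ℝ) • T g), Lp.coeFn_smul (a:ℝ) (T f),
      Lp.coeFn_smul (b:ℝ) (T g)] with q h1 h2 h3 h4
    have := h1
    rw [h2, Pi.add_apply, h3, h4, Pi.smul_apply, Pi.smul_apply, smul_eq_mul, smul_eq_mul] at this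
    exact this
  have Hae : ∀ᵐ q ∂μ, ∀ p : ℚ × ℚ, 0 ≤ (p.1:ℝ) → 0 ≤ (p.2:ℝ) →
      (p.1:ℝ)^2 + (p.2:ℝ)^2 ≤ 1 →
      (p.1:ℝ) * (T f : Q → ℝ) q + (p.2:ℝ) * (T g : Q → ℝ) q ≤ (T h : Q → ℝ) q := by
    rw [ae_all_iff]
    intro p
    by_cases hp : 0 ≤ ((p.1:ℚ):ℝ) ∧ 0 ≤ ((p.2:ℚ):ℝ) ∧ ((p.1:ℚ):ℝ)^2 + ((p.2:ℚ):ℝ)^2 ≤ 1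
    · filter_upwards [key p.1 p.2 hp.1 hp.2.1 hp.2.2] with q hq _ _ _
      exact hq
    · filter_upwards with q h1 h2 h3
      exact absurd ⟨h1, h2, h3⟩ hp
  filter_upwards [Hae, hTf0, hTg0, hTh0] with q H1 H2 H3 H4
  exact ptw_aux H2 H3 H4 (fun a b ha hb hab => H1 (a, b) ha hb hab)
end

section
/- Let T be a positivity-preserving bounded linear operator on L²(Q,μ), and let f = Σᵢ αᵢ χ_{Aᵢ}, g = Σᵢ βᵢ χ_{Aᵢ} be nonnegative simple functions with αᵢ, βᵢ ≥ 0 and pairwise disjoint measurable sets Aᵢ of finite measure. Then pointwise a.e., (Tf)² + (Tg)² ≤ (T(f²+g²)^{1/2})², where (f²+g²)^{1/2} = Σᵢ (αᵢ²+βᵢ²)^{1/2} χ_{Aᵢ}. -/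
open MeasureTheory Filter

open scoped ENNReal

/-! On the span of the indicators `χ_{Aᵢ}`, `T` acts pointwise as `Σᵢ cᵢ χᵢ ↦ Σᵢ cᵢ aᵢ(q)` with
`aᵢ = T χ_{Aᵢ} ≥ 0`. The inequality at `q` is then the triangle inequality in `ℂ` for
`Σᵢ aᵢ(q) (αᵢ + βᵢ i)`, whose real and imaginary parts are `(Tf)(q)` and `(Tg)(q)`. -/

theorem sq_sum_mul_add_sq_sum_mul_le {ι : Type*} (s : Finset ι) (α β a : ι → ℝ)
    (ha : ∀ i ∈ s, 0 ≤ a i) :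
    (∑ i ∈ s, α i * a i) ^ 2 + (∑ i ∈ s, β i * a i) ^ 2 ≤
      (∑ i ∈ s, √(α i ^ 2 + β i ^ 2) * a i) ^ 2 := by
  set z : ℂ := ∑ i ∈ s, (a i : ℂ) * ⟨α i, β i⟩
  have hz : ‖z‖ ^ 2 = (∑ i ∈ s, α i * a i) ^ 2 + (∑ i ∈ s, β i * a i) ^ 2 := by
    simp only [z, Complex.sq_norm, Complex.normSq_apply, Complex.re_sum, Complex.im_sum,
      Complex.mul_re, Complex.mul_im, Complex.ofReal_re, Complex.ofReal_im, mul_zero, sub_zero,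
      zero_add, mul_comm]
    ring
  have hterm : ∀ i ∈ s, ‖(a i : ℂ) * ⟨α i, β i⟩‖ = √(α i ^ 2 + β i ^ 2) * a i := by
    intro i hi
    rw [norm_mul, Complex.norm_of_nonneg (ha i hi), Complex.norm_def, Complex.normSq_mk, mul_comm]
    ring_nf
  calc _ = ‖z‖ ^ 2 := hz.symm
    _ ≤ (∑ i ∈ s, ‖(a i : ℂ) * ⟨α i, β i⟩‖) ^ 2 := by gcongr; exact norm_sum_le _ _
    _ = _ := by rw [Finset.sum_congr rfl hterm]

namespace MeasureTheory.Lp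

variable {Q : Type*} [MeasurableSpace Q] {μ : Measure Q} {p : ℝ≥0∞}

theorem coeFn_sum_smul {ι : Type*} (s : Finset ι) (c : ι → ℝ) (v : ι → Lp ℝ p μ) :
    ⇑(∑ i ∈ s, c i • v i) =ᵐ[μ] fun q => ∑ i ∈ s, c i * v i q := by
  filter_upwards [coeFn_fun_finsetSum s (fun i => c i • v i),
    eventually_all_finset s |>.2 fun i _ => coeFn_smul (c i) (v i)] with q hsum hsmul
  rw [hsum]
  exact Finset.sum_congr rfl fun i hi => hsmul i hi

theorem indicatorConstLp_nonneg {s : Set Q} (hs : MeasurableSet s) (hμs : μ s ≠ ∞) {c : ℝ}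
    (hc : 0 ≤ c) : 0 ≤ indicatorConstLp p hs hμs c := by
  refine (coeFn_nonneg _).1 ?_
  filter_upwards [indicatorConstLp_coeFn (p := p) (hμs := hμs) (c := c)] with q hq
  rw [hq]
  exact Set.indicator_nonneg (fun _ _ => hc) q

theorem eq_sum_smul_indicatorConstLp {ι : Type*} [Fintype ι] {A : ι → Set Q}
    (hA : ∀ i, MeasurableSet (A i)) (hμA : ∀ i, μ (A i) ≠ ∞) (c : ι → ℝ) {w : Lp ℝ p μ}
    (hw : w =ᵐ[μ] fun q => ∑ i, (A i).indicator (fun _ => c i) q) :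
    w = ∑ i, c i • indicatorConstLp p (hA i) (hμA i) (1 : ℝ) := by
  refine Lp.ext ?_
  filter_upwards [hw, coeFn_sum_smul Finset.univ c _,
    eventually_all.2 fun i => indicatorConstLp_coeFn (hs := hA i) (hμs := hμA i) (c := (1 : ℝ))]
    with q hwq hsum hind
  rw [hwq, hsum]
  refine Finset.sum_congr rfl fun i _ => ?_
  rw [hind i]
  by_cases hq : q ∈ A i <;> simp [hq]

end MeasureTheory.Lp

theorem stmt1_general {Q : Type*} [MeasurableSpace Q] (μ : Measure Q)
    (T : Lp ℝ 2 μ →L[ℝ] Lp ℝ 2 μ)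
    (hT : ∀ u : Lp ℝ 2 μ, 0 ≤ u → 0 ≤ T u)
    (n : ℕ) (α β : Fin n → ℝ)
    (A : Fin n → Set Q) (hAmeas : ∀ i, MeasurableSet (A i))
    (hAfin : ∀ i, μ (A i) < ⊤)
    (f g h : Lp ℝ 2 μ)
    (hf : (f : Q → ℝ) =ᵐ[μ] fun q => ∑ i, Set.indicator (A i) (fun _ => α i) q)
    (hg : (g : Q → ℝ) =ᵐ[μ] fun q => ∑ i, Set.indicator (A i) (fun _ => β i) q)
    (hh : (h : Q → ℝ) =ᵐ[μ]
      fun q => ∑ i, Set.indicator (A i) (fun _ => Real.sqrt (α i ^ 2 + β i ^ 2)) q) :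
    ∀ᵐ q ∂μ, ((T f : Q → ℝ) q) ^ 2 + ((T g : Q → ℝ) q) ^ 2 ≤ ((T h : Q → ℝ) q) ^ 2 := by
  set χ : Fin n → Lp ℝ 2 μ := fun i => indicatorConstLp 2 (hAmeas i) (hAfin i).ne 1
  have hTχ : ∀ i, ∀ᵐ q ∂μ, 0 ≤ T (χ i) q := fun i =>
    (Lp.coeFn_nonneg _).2 (hT _ (Lp.indicatorConstLp_nonneg _ _ zero_le_one))
  have hTsimple : ∀ (c : Fin n → ℝ) (w : Lp ℝ 2 μ),
      w =ᵐ[μ] (fun q => ∑ i, (A i).indicator (fun _ => c i) q) →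
      T w =ᵐ[μ] fun q => ∑ i, c i * T (χ i) q := by
    intro c w hw
    rw [Lp.eq_sum_smul_indicatorConstLp hAmeas (fun i => (hAfin i).ne) c hw, map_sum]
    simp_rw [map_smul]
    exact Lp.coeFn_sum_smul _ _ _
  filter_upwards [hTsimple α f hf, hTsimple β g hg, hTsimple _ h hh, eventually_all.2 hTχ]
    with q hTf hTg hTh hTχq
  rw [hTf, hTg, hTh]
  exact sq_sum_mul_add_sq_sum_mul_le _ α β _ fun i _ => hTχq i

/-- Lemma 1 for simple functions: if `T` is positivity preserving on `L²(Q,μ)`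
and `f = Σᵢ αᵢ χ_{Aᵢ}`, `g = Σᵢ βᵢ χ_{Aᵢ}` with `αᵢ, βᵢ ≥ 0` and pairwise disjoint measurable
sets `Aᵢ` of finite measure, then a.e. `(Tf)² + (Tg)² ≤ (T (f²+g²)^{1/2})²`, where
`(f²+g²)^{1/2} = Σᵢ (αᵢ²+βᵢ²)^{1/2} χ_{Aᵢ}`. -/
theorem stmt1 {Q : Type*} [MeasurableSpace Q] (μ : Measure Q) [SigmaFinite μ]
    (T : Lp ℝ 2 μ →L[ℝ] Lp ℝ 2 μ)
    (hT : ∀ u : Lp ℝ 2 μ, 0 ≤ u → 0 ≤ T u)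
    (n : ℕ) (α β : Fin n → ℝ) (hα : ∀ i, 0 ≤ α i) (hβ : ∀ i, 0 ≤ β i)
    (A : Fin n → Set Q) (hAmeas : ∀ i, MeasurableSet (A i))
    (hAfin : ∀ i, μ (A i) < ⊤)
    (hAdisj : Pairwise (Function.onFun Disjoint A))
    (f g h : Lp ℝ 2 μ)
    (hf : (f : Q → ℝ) =ᵐ[μ] fun q => ∑ i, Set.indicator (A i) (fun _ => α i) q)
    (hg : (g : Q → ℝ) =ᵐ[μ] fun q => ∑ i, Set.indicator (A i) (fun _ => β i) q)
    (hh : (h : Q → ℝ) =ᵐ[μ]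
      fun q => ∑ i, Set.indicator (A i) (fun _ => Real.sqrt (α i ^ 2 + β i ^ 2)) q) :
    ∀ᵐ q ∂μ, ((T f : Q → ℝ) q) ^ 2 + ((T g : Q → ℝ) q) ^ 2 ≤ ((T h : Q → ℝ) q) ^ 2 :=
  stmt1_general μ T hT n α β A hAmeas hAfin f g h hf hg hh
end

section
/- Let h be a self-adjoint operator on L²(Q,μ) bounded from below such that e^{-th} is positivity preserving for every t > 0. Then for every f in the domain of h, the absolute value |f| lies in the form domain Q(h) and the quadratic form satisfies (|f|, h|f|) ≤ ⟨f, hf⟩. -/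
open MeasureTheory Filter Topology

/-- The semigroup `P t = e^{-t h}` of a self-adjoint operator `h` on `L²(Q,μ)` that is
bounded from below and whose semigroup is positivity preserving for all `t > 0`. -/
structure HeatSemigroup {Q : Type*} [MeasurableSpace Q] (μ : Measure Q) where
  P : ℝ → (Lp ℝ 2 μ →L[ℝ] Lp ℝ 2 μ)
  selfAdj : ∀ t > 0, ∀ u v : Lp ℝ 2 μ, (inner ℝ (P t u) v : ℝ) = inner ℝ u (P t v)
  posPres : ∀ t > 0, ∀ u : Lp ℝ 2 μ, 0 ≤ u → 0 ≤ P t u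
  semigroup : ∀ s > 0, ∀ t > 0, P (s + t) = (P s).comp (P t)
  /-- semiboundedness of `h` (i.e. `h ≥ -b`) at the semigroup level -/
  bddBelow : ∃ b : ℝ, ∀ t > 0, ‖P t‖ ≤ Real.exp (t * b)

/-! Writing `f = f⁺ - f⁻`, positivity preservation gives `⟪f, e^{-th} f⟫ ≤ ⟪|f|, e^{-th} |f|⟫`;
since `‖|f|‖ = ‖f‖`, the difference quotients `t⁻¹ ⟪u, u - e^{-th} u⟫` of `u = |f|` are bounded by
those of `f`, which converge to `⟪f, h f⟫`. For any `u` the function `F t = ⟪u, e^{-th} u⟫` is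
midpoint convex, as `F ((s + t) / 2) = ⟪e^{-sh/2} u, e^{-th/2} u⟫ ≤ (F s + F t) / 2`, and locally
bounded because `h` is semibounded, hence convex; so its difference quotients at `0` are monotone
and those of `|f|` increase to a finite limit as `t → 0⁺`. -/

open Set
open scoped InnerProductSpace

theorem nonpos_of_midpoint_convex_of_bddAbove {e : ℝ → ℝ} {a b : ℝ}
    (hmid : ∀ x ∈ Icc a b, ∀ y ∈ Icc a b, e ((x + y) / 2) ≤ (e x + e y) / 2)
    (ha : e a ≤ 0) (hb : e b ≤ 0) (hbdd : BddAbove (e '' Icc a b)) :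
    ∀ x ∈ Icc a b, e x ≤ 0 := by
  intro x hx
  by_contra! hpos
  -- Reflecting an endpoint through `y` gives a point of `[a, b]` where `e` is at least `2 * e y`.
  have doubling : ∀ n : ℕ, ∃ y ∈ Icc a b, 2 ^ n * e x ≤ e y := by
    intro n
    induction n with
    | zero => exact ⟨x, hx, by simp⟩
    | succ n ih =>
      obtain ⟨y, ⟨hay, hyb⟩, hy⟩ := ih
      rcases le_or_gt (2 * y - a) b with hle | hgt
      · refine ⟨2 * y - a, ⟨by linarith, hle⟩, ?_⟩
        have := hmid a (left_mem_Icc.2 (hay.trans hyb)) (2 * y - a) ⟨by linarith, hle⟩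
        rw [show (a + (2 * y - a)) / 2 = y by ring] at this
        rw [pow_succ]
        linarith
      · refine ⟨2 * y - b, ⟨by linarith, by linarith⟩, ?_⟩
        have := hmid b (right_mem_Icc.2 (hay.trans hyb)) (2 * y - b) ⟨by linarith, by linarith⟩
        rw [show (b + (2 * y - b)) / 2 = y by ring] at this
        rw [pow_succ]
        linarith
  obtain ⟨M, hM⟩ := hbdd
  obtain ⟨n, hn⟩ := pow_unbounded_of_one_lt (M / e x) (one_lt_two (α := ℝ))
  obtain ⟨y, hy, hxy⟩ := doubling n
  have := hM (mem_image_of_mem e hy)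
  rw [div_lt_iff₀ hpos] at hn
  linarith

theorem convexOn_of_midpoint_convex_of_bddAbove {s : Set ℝ} {F : ℝ → ℝ} (hs : Convex ℝ s)
    (hmid : ∀ x ∈ s, ∀ y ∈ s, F ((x + y) / 2) ≤ (F x + F y) / 2)
    (hbdd : ∀ x ∈ s, ∀ y ∈ s, BddAbove (F '' Icc x y)) :
    ConvexOn ℝ s F := by
  refine LinearOrder.convexOn_of_lt hs fun x hx y hy hxy a b ha hb hab => ?_
  have hxy' : y - x ≠ 0 := sub_ne_zero.2 hxy.ne'
  set chord : ℝ → ℝ := fun z => F x + (F y - F x) / (y - x) * (z - x)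
  have hIcc : Icc x y ⊆ s := hs.ordConnected.out hx hy
  have hchord_bdd : BddAbove ((fun z => -chord z) '' Icc x y) :=
    isCompact_Icc.bddAbove_image (by fun_prop)
  have hexcess := nonpos_of_midpoint_convex_of_bddAbove (e := fun z => F z - chord z)
    (fun p hp q hq => by
      have := hmid p (hIcc hp) q (hIcc hq)
      simp only [chord]
      linarith)
    (by simp [chord]) (by simp [chord, div_mul_cancel₀ _ hxy'])
    (by
      obtain ⟨M, hM⟩ := hbdd x hx y hy
      obtain ⟨N, hN⟩ := hchord_bdd
      refine ⟨M + N, forall_mem_image.2 fun z hz => ?_⟩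
      linarith [hM (mem_image_of_mem F hz), hN (mem_image_of_mem (fun z => -chord z) hz)])
    (a • x + b • y) (Convex.mem_Icc hxy.le |>.2 ⟨a, b, ha.le, hb.le, hab, rfl⟩)
  have hchord : chord (a • x + b • y) = a • F x + b • F y := by
    simp only [chord, smul_eq_mul]
    rw [show a * x + b * y - x = (y - x) * b by linear_combination x * hab, ← mul_assoc,
      div_mul_cancel₀ _ hxy']
    linear_combination (-F x) * hab
  linarith

theorem exists_tendsto_nhdsGT_le_of_antitoneOn {g h : ℝ → ℝ} {a L : ℝ}
    (hg : AntitoneOn g (Ioi a)) (hgh : ∀ t > a, g t ≤ h t) (hh : Tendsto h (𝓝[>] a) (𝓝 L)) :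
    ∃ q, Tendsto g (𝓝[>] a) (𝓝 q) ∧ q ≤ L := by
  have hbdd : BddAbove (g '' Ioi a) := by
    refine ⟨L + 1, forall_mem_image.2 fun t ht => ?_⟩
    obtain ⟨s, hs, hsa, hst⟩ := ((hh.eventually (eventually_lt_nhds (lt_add_one L))).and
      (Ioo_mem_nhdsGT ht)).exists
    linarith [hg hsa ht hst.le, hgh s hsa]
  exact ⟨_, hg.tendsto_nhdsGT hbdd, le_of_tendsto_of_tendsto (hg.tendsto_nhdsGT hbdd) hh
    (eventually_nhdsWithin_of_forall hgh)⟩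

section PositivityPreserving

variable {Q : Type*} [MeasurableSpace Q] {μ : Measure Q}

theorem MeasureTheory.L2.inner_nonneg_of_nonneg {w z : Lp ℝ 2 μ} (hw : 0 ≤ w) (hz : 0 ≤ z) :
    0 ≤ ⟪w, z⟫_ℝ := by
  rw [L2.inner_def]
  refine integral_nonneg_of_ae ?_
  filter_upwards [(Lp.coeFn_nonneg w).2 hw, (Lp.coeFn_nonneg z).2 hz] with x hwx hzx
  simpa [RCLike.inner_apply] using mul_nonneg hzx hwx

theorem inner_apply_le_inner_abs_apply {T : Lp ℝ 2 μ →L[ℝ] Lp ℝ 2 μ}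
    (hT : ∀ u, 0 ≤ u → 0 ≤ T u) (f : Lp ℝ 2 μ) : ⟪f, T f⟫_ℝ ≤ ⟪|f|, T |f|⟫_ℝ := by
  have hpos := posPart_nonneg f
  have hneg := negPart_nonneg f
  have hcross₁ := L2.inner_nonneg_of_nonneg hpos (hT _ hneg)
  have hcross₂ := L2.inner_nonneg_of_nonneg hneg (hT _ hpos)
  rw [← posPart_add_negPart f]
  conv_lhs => rw [← posPart_sub_negPart f]
  rw [map_sub, map_add, inner_sub_left, inner_add_left, inner_sub_right, inner_sub_right,
    inner_add_right, inner_add_right]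
  linarith

theorem inner_abs_sub_apply_le {T : Lp ℝ 2 μ →L[ℝ] Lp ℝ 2 μ}
    (hT : ∀ u, 0 ≤ u → 0 ≤ T u) (f : Lp ℝ 2 μ) :
    ⟪|f|, |f| - T |f|⟫_ℝ ≤ ⟪f, f - T f⟫_ℝ := by
  rw [inner_sub_right, inner_sub_right, real_inner_self_eq_norm_sq, real_inner_self_eq_norm_sq,
    norm_abs_eq_norm]
  linarith [inner_apply_le_inner_abs_apply hT f]

end PositivityPreserving

namespace HeatSemigroup

variable {Q : Type*} [MeasurableSpace Q] {μ : Measure Q} (H : HeatSemigroup μ)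

/-- `H.P t` is unconstrained for `t ≤ 0`; setting it to `1` there makes the semigroup law and
self-adjointness hold on all of `[0, ∞)`. -/
noncomputable def extendedP (t : ℝ) : Lp ℝ 2 μ →L[ℝ] Lp ℝ 2 μ :=
  if 0 < t then H.P t else 1

theorem extendedP_of_pos {t : ℝ} (ht : 0 < t) : H.extendedP t = H.P t := if_pos ht

theorem extendedP_zero : H.extendedP 0 = 1 := if_neg (lt_irrefl 0)

theorem inner_extendedP_left {t : ℝ} (ht : 0 ≤ t) (u w : Lp ℝ 2 μ) :
    ⟪H.extendedP t u, w⟫_ℝ = ⟪u, H.extendedP t w⟫_ℝ := by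
  rcases ht.eq_or_lt with rfl | ht
  · simp [extendedP_zero]
  · simp only [H.extendedP_of_pos ht, H.selfAdj t ht]

theorem extendedP_add {s t : ℝ} (hs : 0 ≤ s) (ht : 0 ≤ t) :
    H.extendedP (s + t) = (H.extendedP s).comp (H.extendedP t) := by
  rcases hs.eq_or_lt with rfl | hs
  · ext u; simp [extendedP_zero]
  rcases ht.eq_or_lt with rfl | ht
  · ext u; simp [extendedP_zero]
  rw [H.extendedP_of_pos (add_pos hs ht), H.extendedP_of_pos hs, H.extendedP_of_pos ht,
    H.semigroup s hs t ht]

theorem inner_extendedP_add {s t : ℝ} (hs : 0 ≤ s) (ht : 0 ≤ t) (u : Lp ℝ 2 μ) :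
    ⟪u, H.extendedP (s + t) u⟫_ℝ = ⟪H.extendedP s u, H.extendedP t u⟫_ℝ := by
  rw [H.extendedP_add hs ht, ContinuousLinearMap.comp_apply, H.inner_extendedP_left hs]

theorem inner_extendedP_self_eq_norm_sq {t : ℝ} (ht : 0 ≤ t) (u : Lp ℝ 2 μ) :
    ⟪u, H.extendedP t u⟫_ℝ = ‖H.extendedP (t / 2) u‖ ^ 2 := by
  have ht2 : 0 ≤ t / 2 := by positivity
  rw [← real_inner_self_eq_norm_sq, ← H.inner_extendedP_add ht2 ht2, add_halves]

theorem inner_extendedP_midpoint_le {x y : ℝ} (hx : 0 ≤ x) (hy : 0 ≤ y) (u : Lp ℝ 2 μ) :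
    ⟪u, H.extendedP ((x + y) / 2) u⟫_ℝ
      ≤ (⟪u, H.extendedP x u⟫_ℝ + ⟪u, H.extendedP y u⟫_ℝ) / 2 := by
  set a := H.extendedP (x / 2) u
  set b := H.extendedP (y / 2) u
  rw [add_div, H.inner_extendedP_add (by positivity) (by positivity),
    H.inner_extendedP_self_eq_norm_sq hx, H.inner_extendedP_self_eq_norm_sq hy]
  linarith [norm_sub_sq_real a b, sq_nonneg ‖a - b‖]

theorem bddAbove_inner_extendedP (u : Lp ℝ 2 μ) (T : ℝ) :
    BddAbove ((fun t => ⟪u, H.extendedP t u⟫_ℝ) '' Icc 0 T) := by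
  obtain ⟨b, hb⟩ := H.bddBelow
  refine ⟨Real.exp (T * |b|) * ‖u‖ ^ 2, forall_mem_image.2 fun t ⟨ht0, htT⟩ => ?_⟩
  have hnorm : ‖H.extendedP t‖ ≤ Real.exp (T * |b|) := by
    rcases ht0.eq_or_lt with rfl | ht
    · exact H.extendedP_zero ▸
        ContinuousLinearMap.norm_id_le.trans (Real.one_le_exp (by positivity))
    · rw [H.extendedP_of_pos ht]
      refine (hb t ht).trans (Real.exp_le_exp.2 ?_)
      exact (mul_le_mul_of_nonneg_left (le_abs_self b) ht0).trans
        (mul_le_mul_of_nonneg_right htT (abs_nonneg b))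
  calc ⟪u, H.extendedP t u⟫_ℝ ≤ ‖u‖ * (‖H.extendedP t‖ * ‖u‖) :=
        (real_inner_le_norm _ _).trans
          (mul_le_mul_of_nonneg_left ((H.extendedP t).le_opNorm u) (norm_nonneg u))
    _ ≤ ‖u‖ * (Real.exp (T * |b|) * ‖u‖) := by gcongr
    _ = Real.exp (T * |b|) * ‖u‖ ^ 2 := by ring

theorem convexOn_inner_extendedP (u : Lp ℝ 2 μ) :
    ConvexOn ℝ (Ici 0) fun t => ⟪u, H.extendedP t u⟫_ℝ :=
  convexOn_of_midpoint_convex_of_bddAbove (convex_Ici 0)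
    (fun _ hx _ hy => H.inner_extendedP_midpoint_le hx hy u)
    (fun _ hx y _ => (H.bddAbove_inner_extendedP u y).mono
      (image_mono (Icc_subset_Icc_left hx)))

theorem antitoneOn_inner_sub_apply_div (u : Lp ℝ 2 μ) :
    AntitoneOn (fun t => ⟪u, u - H.P t u⟫_ℝ / t) (Ioi 0) := by
  intro s hs t ht hst
  have hslope := (H.convexOn_inner_extendedP u).secant_mono self_mem_Ici
    (Ioi_subset_Ici_self hs) (Ioi_subset_Ici_self ht) (ne_of_gt hs) (ne_of_gt ht) hst
  simp only [H.extendedP_of_pos hs, H.extendedP_of_pos ht, extendedP_zero, sub_zero,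
    one_apply_eq_self] at hslope
  simp only [inner_sub_right, ← neg_sub (⟪u, H.P _ u⟫_ℝ), neg_div]
  exact neg_le_neg hslope

end HeatSemigroup

theorem stmt3_general {Q : Type*} [MeasurableSpace Q] (μ : Measure Q)
    (H : HeatSemigroup μ) (f v : Lp ℝ 2 μ)
    (hf : Tendsto (fun t : ℝ => t⁻¹ • (f - H.P t f)) (nhdsWithin 0 (Set.Ioi 0)) (nhds v)) :
    ∃ q : ℝ,
      Tendsto (fun t : ℝ => (inner ℝ |f| (|f| - H.P t |f|) : ℝ) / t)
        (nhdsWithin 0 (Set.Ioi 0)) (nhds q) ∧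
      q ≤ (inner ℝ f v : ℝ) := by
  have hquot : Tendsto (fun t => ⟪f, f - H.P t f⟫_ℝ / t) (𝓝[>] 0) (𝓝 ⟪f, v⟫_ℝ) :=
    (tendsto_const_nhds.inner hf).congr fun t => by rw [real_inner_smul_right, div_eq_inv_mul]
  exact exists_tendsto_nhdsGT_le_of_antitoneOn (H.antitoneOn_inner_sub_apply_div |f|)
    (fun t ht => div_le_div_of_nonneg_right (inner_abs_sub_apply_le (H.posPres t ht) f) ht.le)
    hquot

/-- Let `h` be a semibounded self-adjoint operator on `L²(Q,μ)` with
positivity-preserving semigroup `e^{-th}`.  If `f ∈ dom h` (encoded by the norm convergence of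
`t⁻¹ (f - e^{-th} f)` to `v = h f` as `t → 0⁺`), then `|f|` lies in the form domain `Q(h)`
(i.e. `t⁻¹ ⟨|f|, (1 - e^{-th})|f|⟩` converges as `t → 0⁺`), and the quadratic form value
satisfies `(|f|, h |f|) ≤ ⟨f, h f⟩`. -/
theorem stmt3 {Q : Type*} [MeasurableSpace Q] (μ : Measure Q) [SigmaFinite μ]
    (H : HeatSemigroup μ) (f v : Lp ℝ 2 μ)
    (hf : Tendsto (fun t : ℝ => t⁻¹ • (f - H.P t f)) (nhdsWithin 0 (Set.Ioi 0)) (nhds v)) :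
    ∃ q : ℝ,
      Tendsto (fun t : ℝ => (inner ℝ |f| (|f| - H.P t |f|) : ℝ) / t)
        (nhdsWithin 0 (Set.Ioi 0)) (nhds q) ∧
      q ≤ (inner ℝ f v : ℝ) :=
  stmt3_general μ H f v hf
end

section
/- Let h be a self-adjoint operator on L²(Q,μ) bounded from below such that e^{-th} is positivity preserving for every t > 0. Then for all nonnegative f, g in the form domain Q(h), the function √(f²+g²) lies in Q(h) and (√(f²+g²), h√(f²+g²)) ≤ (f, hf) + (g, hg). -/
/-!
Put `a_u(t) = ⟨u, e^{-th} u⟩ = ‖e^{-th/2} u‖²`. For rational `p, q` we have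
`p f + q g ≤ √(p² + q²) s`; applying the positivity preserving `e^{-th/2}` and taking the
supremum over the countably many rational directions gives
`(e^{-th/2} f)² + (e^{-th/2} g)² ≤ (e^{-th/2} s)²` a.e. Hence `a_f + a_g ≤ a_s`, and since
`‖s‖² = ‖f‖² + ‖g‖²`, the difference quotient `t⁻¹⟨s, (1 - e^{-th}) s⟩` is dominated by the
sum of those of `f` and `g`.

It remains to see that the quotient for `s` has a limit. The semigroup law and Cauchy–Schwarz
make `a_s` midpoint convex on `(0, ∞)`, and `‖e^{-th}‖ ≤ e^{tb}` gives `limsup_{t→0⁺} a_s ≤ ‖s‖²`.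
Approximating convex combinations by dyadic ones, with the second endpoint sliding to `0`, shows
that `t ↦ (‖s‖² - a_s(t)) / t` is antitone, so it converges as `t → 0⁺` to a limit bounded by
`(f, h f) + (g, h g)`.
-/

open MeasureTheory Filter Topology

open Set
open scoped ENNReal

lemma mul_add_mul_le_sqrt_mul_sqrt (p q A B : ℝ) :
    p * A + q * B ≤ √(p ^ 2 + q ^ 2) * √(A ^ 2 + B ^ 2) := by
  rw [← Real.sqrt_mul (by positivity)]
  exact Real.le_sqrt_of_sq_le (by nlinarith [sq_nonneg (p * B - q * A)])

lemma sq_add_sq_le_sq_of_forall_rat {A B C : ℝ}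
    (h : ∀ p q : ℚ, (p : ℝ) * A + q * B ≤ √((p : ℝ) ^ 2 + (q : ℝ) ^ 2) * C) :
    A ^ 2 + B ^ 2 ≤ C ^ 2 := by
  have key : A * A + B * B ≤ √(A ^ 2 + B ^ 2) * C :=
    (Rat.denseRange_cast (𝕜 := ℝ)).induction_on₂
      (p := fun x y => x * A + y * B ≤ √(x ^ 2 + y ^ 2) * C)
      (isClosed_le (by fun_prop) (by fun_prop)) h A B
  have hr := Real.sq_sqrt (add_nonneg (sq_nonneg A) (sq_nonneg B))
  nlinarith [Real.sqrt_nonneg (A ^ 2 + B ^ 2), sq_nonneg (C - √(A ^ 2 + B ^ 2))]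

def MidpointConvexOn (s : Set ℝ) (a : ℝ → ℝ) : Prop :=
  ∀ x ∈ s, ∀ y ∈ s, a ((x + y) / 2) ≤ (a x + a y) / 2

lemma MidpointConvexOn.le_dyadic {s : Set ℝ} {a : ℝ → ℝ} (ha : MidpointConvexOn s a)
    (hs : Convex ℝ s) {x y : ℝ} (hx : x ∈ s) (hy : y ∈ s) (n : ℕ) :
    ∀ j : ℕ, j ≤ 2 ^ n →
      a (j / 2 ^ n * x + (1 - j / 2 ^ n) * y) ≤ j / 2 ^ n * a x + (1 - j / 2 ^ n) * a y := by
  induction n with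
  | zero =>
    intro j hj
    interval_cases j <;> norm_num
  | succ n ih =>
    intro j hj
    have hmem : ∀ i : ℕ, i ≤ 2 ^ n → (i / 2 ^ n : ℝ) * x + (1 - i / 2 ^ n) * y ∈ s :=
      fun i hi => hs hx hy (by positivity)
        (sub_nonneg.2 (div_le_one_of_le₀ (by exact_mod_cast hi) (by positivity))) (by ring)
    rcases le_or_gt j (2 ^ n) with hjn | hjn
    · have hpt : (j / 2 ^ (n + 1) : ℝ) * x + (1 - j / 2 ^ (n + 1)) * y
          = ((j / 2 ^ n * x + (1 - j / 2 ^ n) * y) + y) / 2 := by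
        rw [pow_succ]; ring
      rw [hpt]
      have := ha _ (hmem j hjn) y hy
      have hw : (j / 2 ^ (n + 1) : ℝ) = j / 2 ^ n / 2 := by rw [pow_succ]; ring
      rw [hw]
      linarith [ih j hjn]
    · obtain ⟨i, rfl⟩ := Nat.exists_eq_add_of_le hjn.le
      have hi : i ≤ 2 ^ n := by rw [pow_succ] at hj; omega
      have hw : ((2 ^ n + i : ℕ) / 2 ^ (n + 1) : ℝ) = (1 + i / 2 ^ n) / 2 := by
        push_cast; field_simp; ring
      rw [hw, show (1 + i / 2 ^ n) / 2 * x + (1 - (1 + i / 2 ^ n) / 2) * y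
          = (x + (i / 2 ^ n * x + (1 - i / 2 ^ n) * y)) / 2 by ring]
      have := ha x hx _ (hmem i hi)
      linarith [ih i hi]

lemma exists_dyadic_lt_tendsto {θ : ℝ} (h0 : 0 < θ) (h1 : θ ≤ 1) :
    ∃ j : ℕ → ℕ, (∀ n, j n ≤ 2 ^ n ∧ (j n / 2 ^ n : ℝ) < θ) ∧
      Tendsto (fun n => (j n / 2 ^ n : ℝ)) atTop (𝓝 θ) := by
  set j : ℕ → ℕ := fun n => ⌈(2 : ℝ) ^ n * θ⌉₊ - 1
  have hj : ∀ n, (j n : ℝ) < 2 ^ n * θ ∧ 2 ^ n * θ ≤ j n + 1 := fun n => by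
    have hpos : 0 < (2 : ℝ) ^ n * θ := by positivity
    have hcast : (j n : ℝ) + 1 = ⌈(2 : ℝ) ^ n * θ⌉₊ := by
      rw [Nat.cast_sub (Nat.one_le_iff_ne_zero.2 (Nat.ceil_pos.2 hpos).ne')]
      push_cast; ring
    constructor <;> linarith [Nat.le_ceil ((2 : ℝ) ^ n * θ), Nat.ceil_lt_add_one hpos.le]
  have hlt : ∀ n, (j n / 2 ^ n : ℝ) < θ := fun n => by
    rw [div_lt_iff₀ (by positivity)]
    linarith [(hj n).1]
  refine ⟨j, fun n => ⟨?_, hlt n⟩, ?_⟩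
  · have : (j n : ℝ) < 2 ^ n := (hj n).1.trans_le (mul_le_of_le_one_right (by positivity) h1)
    exact_mod_cast this.le
  · refine tendsto_of_tendsto_of_tendsto_of_le_of_le (g := fun n : ℕ => θ - (1 / 2) ^ n)
      ?_ tendsto_const_nhds (fun n => ?_) (fun n => (hlt n).le)
    · simpa using tendsto_const_nhds.sub
        (tendsto_pow_atTop_nhds_zero_of_lt_one (by norm_num : (0 : ℝ) ≤ 1 / 2) (by norm_num))
    · show θ - (1 / 2) ^ n ≤ j n / 2 ^ n
      rw [one_div_pow, le_div_iff₀ (by positivity), sub_mul, one_div_mul_cancel (by positivity)]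
      linarith [(hj n).2]

lemma MidpointConvexOn.le_of_tendsto_nhdsGT_zero {a B : ℝ → ℝ} {c : ℝ}
    (ha : MidpointConvexOn (Ioi 0) a) (hB : ∀ᶠ ε in 𝓝[>] 0, a ε ≤ B ε)
    (hBc : Tendsto B (𝓝[>] 0) (𝓝 c)) {t t' : ℝ} (ht : 0 < t) (htt' : t < t') :
    a t ≤ t / t' * a t' + (1 - t / t') * c := by
  have ht' : 0 < t' := ht.trans htt'
  set θ := t / t'
  have hθt' : θ * t' = t := div_mul_cancel₀ t ht'.ne'
  have hθ1 : θ < 1 := (div_lt_one ht').2 htt'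
  -- writing `t = λₙ t' + (1 - λₙ) εₙ` with dyadic `λₙ ↑ t / t'` forces `εₙ ↓ 0`
  obtain ⟨j, hj, hlim⟩ := exists_dyadic_lt_tendsto (div_pos ht ht') hθ1.le
  set lam : ℕ → ℝ := fun n => j n / 2 ^ n
  set ε : ℕ → ℝ := fun n => (t - lam n * t') / (1 - lam n)
  have hlam1 : ∀ n, 0 < 1 - lam n := fun n => by linarith [(hj n).2]
  have hε : Tendsto ε atTop (𝓝[>] 0) := by
    refine tendsto_nhdsWithin_iff.2 ⟨?_, Eventually.of_forall fun n => ?_⟩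
    · have := ((tendsto_const_nhds (x := t)).sub (hlim.mul_const t')).div
        ((tendsto_const_nhds (x := (1 : ℝ))).sub hlim) (by linarith)
      rwa [hθt', sub_self, zero_div] at this
    · exact div_pos (by nlinarith [(hj n).2]) (hlam1 n)
  have hbound : ∀ᶠ n in atTop, a t ≤ lam n * a t' + (1 - lam n) * B (ε n) := by
    filter_upwards [hε.eventually hB, hε.eventually self_mem_nhdsWithin] with n hBn hεn
    have hpt : lam n * t' + (1 - lam n) * ε n = t := by
      simp only [ε]; field_simp [(hlam1 n).ne']; ring
    calc a t ≤ lam n * a t' + (1 - lam n) * a (ε n) :=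
          hpt ▸ ha.le_dyadic (convex_Ioi 0) ht' hεn n (j n) (hj n).1
      _ ≤ lam n * a t' + (1 - lam n) * B (ε n) := by gcongr; exact (hlam1 n).le
  have hRHS : Tendsto (fun n => lam n * a t' + (1 - lam n) * B (ε n)) atTop
      (𝓝 (θ * a t' + (1 - θ) * c)) :=
    (hlim.mul_const _).add ((tendsto_const_nhds.sub hlim).mul (hBc.comp hε))
  exact ge_of_tendsto hRHS hbound

lemma MidpointConvexOn.antitoneOn_slope {a B : ℝ → ℝ} {c : ℝ}
    (ha : MidpointConvexOn (Ioi 0) a) (hB : ∀ᶠ ε in 𝓝[>] 0, a ε ≤ B ε)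
    (hBc : Tendsto B (𝓝[>] 0) (𝓝 c)) :
    AntitoneOn (fun t => (c - a t) / t) (Ioi 0) := by
  intro x hx y _ hxy
  rcases hxy.eq_or_lt with rfl | hlt
  · rfl
  have hy : 0 < y := lt_trans hx hlt
  have := ha.le_of_tendsto_nhdsGT_zero hB hBc hx hlt
  have hmul := mul_le_mul_of_nonneg_right this hy.le
  rw [show (x / y * a y + (1 - x / y) * c) * y = x * a y + (y - x) * c by field_simp] at hmul
  rw [div_le_div_iff₀ hy hx]
  linarith

lemma AntitoneOn.exists_tendsto_nhdsGT_le {φ ψ : ℝ → ℝ} {a q : ℝ} (hφ : AntitoneOn φ (Ioi a))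
    (hle : φ ≤ᶠ[𝓝[>] a] ψ) (hψ : Tendsto ψ (𝓝[>] a) (𝓝 q)) :
    ∃ l, Tendsto φ (𝓝[>] a) (𝓝 l) ∧ l ≤ q := by
  have hlt : ∀ᶠ t in 𝓝[>] a, φ t < q + 1 := by
    filter_upwards [hle, hψ.eventually (gt_mem_nhds (lt_add_one q))] with t h1 h2
    exact h1.trans_lt h2
  have hbdd : BddAbove (φ '' Ioi a) := by
    refine ⟨q + 1, ?_⟩
    rintro _ ⟨t, ht, rfl⟩
    obtain ⟨t₀, hφt₀, ht₀⟩ := (hlt.and (Ioo_mem_nhdsGT (show a < t from ht))).exists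
    exact (hφ ht₀.1 ht ht₀.2.le).trans hφt₀.le
  exact ⟨_, hφ.tendsto_nhdsGT hbdd, le_of_tendsto_of_tendsto (hφ.tendsto_nhdsGT hbdd) hψ hle⟩

namespace MeasureTheory

variable {Q : Type*} [MeasurableSpace Q] {μ : Measure Q}

lemma Lp.coeFn_smul_add_smul {p : ℝ≥0∞} [Fact (1 ≤ p)] (a b : ℝ) (u v : Lp ℝ p μ) :
    ⇑(a • u + b • v) =ᵐ[μ] fun x => a * u x + b * v x := by
  filter_upwards [Lp.coeFn_add (a • u) (b • v), Lp.coeFn_smul a u, Lp.coeFn_smul b v]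
    with x h1 h2 h3
  rw [h1, Pi.add_apply, h2, h3]
  rfl

lemma sq_add_sq_le_sq_of_map_nonneg {p : ℝ≥0∞} [Fact (1 ≤ p)] (T : Lp ℝ p μ →L[ℝ] Lp ℝ p μ)
    (hT : ∀ u, 0 ≤ u → 0 ≤ T u) {f g s : Lp ℝ p μ}
    (hs : s =ᵐ[μ] fun x => √(f x ^ 2 + g x ^ 2)) :
    ∀ᵐ x ∂μ, T f x ^ 2 + T g x ^ 2 ≤ T s x ^ 2 := by
  have hrat : ∀ a b : ℚ, ∀ᵐ x ∂μ,
      (a : ℝ) * T f x + b * T g x ≤ √((a : ℝ) ^ 2 + (b : ℝ) ^ 2) * T s x := by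
    intro a b
    have hle : (a : ℝ) • f + (b : ℝ) • g ≤ √((a : ℝ) ^ 2 + (b : ℝ) ^ 2) • s := by
      rw [← Lp.coeFn_le]
      filter_upwards [hs, Lp.coeFn_smul_add_smul (a : ℝ) b f g, Lp.coeFn_smul (√_) s]
        with x hsx h1 h2
      rw [h1, h2, Pi.smul_apply, hsx, smul_eq_mul]
      exact mul_add_mul_le_sqrt_mul_sqrt _ _ _ _
    have hTle := sub_nonneg.1 (map_sub T _ _ ▸ hT _ (sub_nonneg.2 hle))
    rw [map_add, map_smul, map_smul, map_smul, ← Lp.coeFn_le] at hTle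
    filter_upwards [hTle, Lp.coeFn_smul_add_smul (a : ℝ) b (T f) (T g), Lp.coeFn_smul (√_) (T s)]
      with x hx h1 h2
    rwa [h1, h2] at hx
  filter_upwards [ae_all_iff.2 fun a => ae_all_iff.2 (hrat a)] with x hx
  exact sq_add_sq_le_sq_of_forall_rat hx

lemma L2.norm_sq_eq_integral (u : Lp ℝ 2 μ) : ‖u‖ ^ 2 = ∫ x, u x ^ 2 ∂μ := by
  rw [← real_inner_self_eq_norm_sq, L2.inner_def]
  simp [sq]

lemma L2.norm_sq_add_norm_sq (u v : Lp ℝ 2 μ) :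
    ‖u‖ ^ 2 + ‖v‖ ^ 2 = ∫ x, u x ^ 2 + v x ^ 2 ∂μ := by
  rw [L2.norm_sq_eq_integral, L2.norm_sq_eq_integral,
    integral_add (Lp.memLp u).integrable_sq (Lp.memLp v).integrable_sq]

end MeasureTheory

namespace HeatSemigroup

variable {Q : Type*} [MeasurableSpace Q] {μ : Measure Q} (H : HeatSemigroup μ)

lemma inner_P_add {x y : ℝ} (hx : 0 < x) (hy : 0 < y) (u : Lp ℝ 2 μ) :
    inner ℝ u (H.P (x + y) u) = inner ℝ (H.P x u) (H.P y u) := by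
  rw [H.semigroup x hx y hy, ContinuousLinearMap.comp_apply, H.selfAdj x hx]

lemma inner_P_eq_norm_sq {t : ℝ} (ht : 0 < t) (u : Lp ℝ 2 μ) :
    inner ℝ u (H.P t u) = ‖H.P (t / 2) u‖ ^ 2 := by
  rw [← real_inner_self_eq_norm_sq, ← H.inner_P_add (half_pos ht) (half_pos ht), add_halves]

lemma midpointConvexOn_inner_P (u : Lp ℝ 2 μ) :
    MidpointConvexOn (Ioi 0) fun t => inner ℝ u (H.P t u) := by
  intro x hx y hy
  have hxy := H.inner_P_add (half_pos hx) (half_pos hy) u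
  rw [← add_div] at hxy
  simp only [hxy, H.inner_P_eq_norm_sq hx, H.inner_P_eq_norm_sq hy]
  nlinarith [real_inner_le_norm (H.P (x / 2) u) (H.P (y / 2) u),
    sq_nonneg (‖H.P (x / 2) u‖ - ‖H.P (y / 2) u‖)]

lemma antitoneOn_inner_sub_P_div (u : Lp ℝ 2 μ) :
    AntitoneOn (fun t => inner ℝ u (u - H.P t u) / t) (Ioi 0) := by
  obtain ⟨b, hb⟩ := H.bddBelow
  have hB : ∀ᶠ t in 𝓝[>] 0, inner ℝ u (H.P t u) ≤ Real.exp (t * b) * ‖u‖ ^ 2 := by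
    filter_upwards [self_mem_nhdsWithin] with t ht
    calc inner ℝ u (H.P t u) ≤ ‖u‖ * ‖H.P t u‖ := real_inner_le_norm _ _
      _ ≤ ‖u‖ * (Real.exp (t * b) * ‖u‖) :=
        mul_le_mul_of_nonneg_left ((H.P t).le_of_opNorm_le (hb t ht) u) (norm_nonneg u)
      _ = Real.exp (t * b) * ‖u‖ ^ 2 := by ring
  have hBc : Tendsto (fun t => Real.exp (t * b) * ‖u‖ ^ 2) (𝓝[>] 0) (𝓝 (‖u‖ ^ 2)) := by
    have hcont : Continuous fun t : ℝ => Real.exp (t * b) * ‖u‖ ^ 2 := by fun_prop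
    simpa using (hcont.tendsto 0).mono_left nhdsWithin_le_nhds
  simpa only [inner_sub_right, real_inner_self_eq_norm_sq] using
    (H.midpointConvexOn_inner_P u).antitoneOn_slope hB hBc

lemma inner_sub_P_div_le {f g s : Lp ℝ 2 μ} (hs : s =ᵐ[μ] fun x => √(f x ^ 2 + g x ^ 2))
    {t : ℝ} (ht : 0 < t) :
    inner ℝ s (s - H.P t s) / t ≤ inner ℝ f (f - H.P t f) / t + inner ℝ g (g - H.P t g) / t := by
  have hnorm : ‖s‖ ^ 2 = ‖f‖ ^ 2 + ‖g‖ ^ 2 := by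
    rw [L2.norm_sq_add_norm_sq, L2.norm_sq_eq_integral]
    refine integral_congr_ae ?_
    filter_upwards [hs] with x hx
    rw [hx, Real.sq_sqrt (by positivity)]
  have hP : ‖H.P (t / 2) f‖ ^ 2 + ‖H.P (t / 2) g‖ ^ 2 ≤ ‖H.P (t / 2) s‖ ^ 2 := by
    rw [L2.norm_sq_add_norm_sq, L2.norm_sq_eq_integral]
    exact integral_mono_ae
      ((Lp.memLp _).integrable_sq.add (Lp.memLp _).integrable_sq) (Lp.memLp _).integrable_sq
      (sq_add_sq_le_sq_of_map_nonneg _ (H.posPres _ (half_pos ht)) hs)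
  rw [← add_div]
  refine div_le_div_of_nonneg_right ?_ ht.le
  simp only [inner_sub_right, real_inner_self_eq_norm_sq, H.inner_P_eq_norm_sq ht]
  linarith

end HeatSemigroup

theorem stmt4_general {Q : Type*} [MeasurableSpace Q] (μ : Measure Q)
    (H : HeatSemigroup μ) (f g s : Lp ℝ 2 μ)
    (qf qg : ℝ)
    (hf : Tendsto (fun t : ℝ => (inner ℝ f (f - H.P t f) : ℝ) / t)
      (nhdsWithin 0 (Set.Ioi 0)) (nhds qf))
    (hg : Tendsto (fun t : ℝ => (inner ℝ g (g - H.P t g) : ℝ) / t)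
      (nhdsWithin 0 (Set.Ioi 0)) (nhds qg))
    (hs : (s : Q → ℝ) =ᵐ[μ] fun q => Real.sqrt ((f : Q → ℝ) q ^ 2 + (g : Q → ℝ) q ^ 2)) :
    ∃ qs : ℝ,
      Tendsto (fun t : ℝ => (inner ℝ s (s - H.P t s) : ℝ) / t)
        (nhdsWithin 0 (Set.Ioi 0)) (nhds qs) ∧
      qs ≤ qf + qg :=
  (H.antitoneOn_inner_sub_P_div s).exists_tendsto_nhdsGT_le
    (eventually_nhdsWithin_of_forall fun _ ht => H.inner_sub_P_div_le hs ht) (hf.add hg)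

/-- For a semibounded self-adjoint `h` with positivity-preserving semigroup,
and nonnegative `f, g` in the form domain `Q(h)` (membership and the form values `qf, qg`
being encoded by convergence of `t⁻¹⟨u,(1-e^{-th})u⟩` as `t → 0⁺`), any `s ∈ L²`
representing `√(f²+g²)` lies in `Q(h)` and `(s, h s) ≤ (f, h f) + (g, h g)`. -/
theorem stmt4 {Q : Type*} [MeasurableSpace Q] (μ : Measure Q) [SigmaFinite μ]
    (H : HeatSemigroup μ) (f g s : Lp ℝ 2 μ) (hfpos : 0 ≤ f) (hgpos : 0 ≤ g)
    (qf qg : ℝ)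
    (hf : Tendsto (fun t : ℝ => (inner ℝ f (f - H.P t f) : ℝ) / t)
      (nhdsWithin 0 (Set.Ioi 0)) (nhds qf))
    (hg : Tendsto (fun t : ℝ => (inner ℝ g (g - H.P t g) : ℝ) / t)
      (nhdsWithin 0 (Set.Ioi 0)) (nhds qg))
    (hs : (s : Q → ℝ) =ᵐ[μ] fun q => Real.sqrt ((f : Q → ℝ) q ^ 2 + (g : Q → ℝ) q ^ 2)) :
    ∃ qs : ℝ,
      Tendsto (fun t : ℝ => (inner ℝ s (s - H.P t s) : ℝ) / t)
        (nhdsWithin 0 (Set.Ioi 0)) (nhds qs) ∧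
      qs ≤ qf + qg :=
  stmt4_general μ H f g s qf qg hf hg hs
end

section
/- Let h be a self-adjoint operator on L²(Q,μ), bounded below, with e^{-th} positivity preserving for all t > 0. If f ∈ Q(h) is real-valued then |f| ∈ Q(h) and (|f|, h|f|) ≤ (f, hf), where (·,h·) denotes the quadratic form. -/
/-!
If `‖e^{-th}‖ ≤ e^{tb}`, then `S t = e^{-tb} e^{-th}` (with `S 0 = 1`) is a symmetric contraction
semigroup, so `φ t = ⟨u, S t u⟩ = ‖S (t/2) u‖²` is antitone on `[0, ∞)` and
`φ s - 2 φ (s + r) + φ (s + 2r) = ‖S (s/2) u - S (s/2 + r) u‖² ≥ 0`.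
Such a function has increasing chord slopes `(φ t - φ 0) / t` on `(0, ∞)`: compare on the grid
`(t/N) ℕ`, where it is a convex sequence, and let `N → ∞`.
Up to terms converging as `t → 0⁺`, `t⁻¹⟨u, (1 - e^{-th}) u⟩` is minus this slope.
Positivity preservation gives `⟨f, e^{-th} f⟩ ≤ ⟨|f|, e^{-th} |f|⟩`, so the slope for `|f|`
dominates the one for `f`; being monotone, it converges as `t → 0⁺`, to a limit at least that for `f`.
-/

open MeasureTheory Filter Topology

open Set Real
open scoped RealInnerProductSpace

theorem mul_sub_le_mul_sub_of_two_mul_le_add {A : ℕ → ℝ}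
    (hA : ∀ k, 2 * A (k + 1) ≤ A k + A (k + 2)) {p q : ℕ} (hqp : q ≤ p) :
    q * (A 0 - A p) ≤ p * (A 0 - A q) := by
  set d : ℕ → ℝ := fun k => A k - A (k + 1)
  have hd : Antitone d := antitone_nat_of_succ_le fun k => by simp only [d]; linarith [hA k]
  induction p, hqp using Nat.le_induction with
  | base => rfl
  | succ p hqp ih =>
    have hstep : q * d p ≤ A 0 - A q := by
      have := Finset.card_nsmul_le_sum (Finset.range q) d (d p)
        fun k hk => hd ((Finset.mem_range.1 hk).le.trans hqp)
      rw [Finset.card_range, nsmul_eq_mul] at this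
      exact this.trans_eq (Finset.sum_range_sub' A q)
    push_cast
    simp only [d] at hstep
    linarith

theorem monotoneOn_slope_zero_of_midpoint_convex {φ : ℝ → ℝ}
    (hconv : ∀ s r, 0 ≤ s → 0 ≤ r → 2 * φ (s + r) ≤ φ s + φ (s + 2 * r))
    (hanti : AntitoneOn φ (Ici 0)) : MonotoneOn (slope φ 0) (Ioi 0) := by
  intro s hs t ht hst
  rw [mem_Ioi] at hs ht
  have key (N : ℕ) (hN : 0 < N) : (⌊s / t * N⌋₊ / N : ℝ) * (φ 0 - φ t) ≤ φ 0 - φ s := by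
    set q := ⌊s / t * N⌋₊
    have hN' : (0 : ℝ) < N := by exact_mod_cast hN
    have hq : (q : ℝ) ≤ s / t * N := Nat.floor_le (by positivity)
    have hqN : q ≤ N := by
      rw [← Nat.cast_le (α := ℝ)]
      exact hq.trans (mul_le_of_le_one_left hN'.le ((div_le_one ht).2 hst))
    have hqs : q * (t / N) ≤ s := by
      rw [mul_div_assoc', div_le_iff₀ hN']
      rw [div_mul_eq_mul_div, le_div_iff₀ ht] at hq
      linarith
    have hchord := mul_sub_le_mul_sub_of_two_mul_le_add (A := fun k => φ (k * (t / N)))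
      (fun k => by
        convert hconv (k * (t / N)) (t / N) (by positivity) (by positivity) using 3 <;>
          push_cast <;> ring) hqN
    simp only [CharP.cast_eq_zero, zero_mul, mul_div_cancel₀ t hN'.ne'] at hchord
    have hφ : φ s ≤ φ (q * (t / N)) := hanti (mem_Ici.2 (by positivity)) (mem_Ici.2 hs.le) hqs
    rw [div_mul_eq_mul_div, div_le_iff₀ hN']
    calc (q : ℝ) * (φ 0 - φ t) ≤ N * (φ 0 - φ (q * (t / N))) := hchord
      _ ≤ (φ 0 - φ s) * N := by rw [mul_comm]; gcongr
  have hlim : Tendsto (fun N : ℕ => (⌊s / t * N⌋₊ / N : ℝ) * (φ 0 - φ t)) atTop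
      (𝓝 (s / t * (φ 0 - φ t))) :=
    ((tendsto_nat_floor_mul_div_atTop (by positivity)).comp
      tendsto_natCast_atTop_atTop).mul_const _
  have hlim_le := le_of_tendsto hlim (eventually_atTop.2 ⟨1, key⟩)
  rw [slope_def_field, slope_def_field, sub_zero, sub_zero, div_le_div_iff₀ hs ht]
  rw [div_mul_eq_mul_div, div_le_iff₀ ht] at hlim_le
  linarith

section SymmContractionSemigroup

variable {E : Type*} [NormedAddCommGroup E] [InnerProductSpace ℝ E]

structure IsSymmContractionSemigroup (S : ℝ → E →L[ℝ] E) : Prop where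
  map_zero : S 0 = ContinuousLinearMap.id ℝ E
  map_add : ∀ s t, 0 ≤ s → 0 ≤ t → S (s + t) = (S s).comp (S t)
  inner_map_left : ∀ t, 0 ≤ t → ∀ x y, ⟪S t x, y⟫ = ⟪x, S t y⟫
  norm_le_one : ∀ t, 0 ≤ t → ‖S t‖ ≤ 1

namespace IsSymmContractionSemigroup

variable {S : ℝ → E →L[ℝ] E} (hS : IsSymmContractionSemigroup S) (u : E)
include hS

theorem inner_apply_add {s t : ℝ} (hs : 0 ≤ s) (ht : 0 ≤ t) :
    ⟪u, S (s + t) u⟫ = ⟪S s u, S t u⟫ := by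
  rw [hS.map_add s t hs ht, ContinuousLinearMap.comp_apply, hS.inner_map_left s hs]

theorem inner_apply_eq_norm_sq {t : ℝ} (ht : 0 ≤ t) : ⟪u, S t u⟫ = ‖S (t / 2) u‖ ^ 2 := by
  have h := hS.inner_apply_add u (s := t / 2) (t := t / 2) (by positivity) (by positivity)
  rwa [add_halves, real_inner_self_eq_norm_sq] at h

theorem two_mul_inner_apply_add_le (s r : ℝ) (hs : 0 ≤ s) (hr : 0 ≤ r) :
    2 * ⟪u, S (s + r) u⟫ ≤ ⟪u, S s u⟫ + ⟪u, S (s + 2 * r) u⟫ := by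
  have hmid : ⟪u, S (s + r) u⟫ = ⟪S (s / 2) u, S (s / 2 + r) u⟫ := by
    rw [← hS.inner_apply_add u (by positivity) (by positivity)]
    ring_nf
  have hend : ⟪u, S (s + 2 * r) u⟫ = ‖S (s / 2 + r) u‖ ^ 2 := by
    rw [hS.inner_apply_eq_norm_sq u (by positivity)]
    ring_nf
  rw [hmid, hend, hS.inner_apply_eq_norm_sq u hs]
  linarith [norm_sub_sq_real (S (s / 2) u) (S (s / 2 + r) u),
    sq_nonneg ‖S (s / 2) u - S (s / 2 + r) u‖]

theorem antitoneOn_inner_apply : AntitoneOn (fun t => ⟪u, S t u⟫) (Ici 0) := by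
  intro s hs t ht hst
  rw [mem_Ici] at hs ht
  set x := S (s / 2) u
  have ht' : ⟪u, S t u⟫ = ⟪x, S (t - s) x⟫ := by
    rw [← ContinuousLinearMap.comp_apply, ← hS.map_add _ _ (sub_nonneg.2 hst) (by positivity),
      ← hS.inner_apply_add u (by positivity) (by linarith)]
    ring_nf
  calc ⟪u, S t u⟫ = ⟪x, S (t - s) x⟫ := ht'
    _ ≤ ‖x‖ * ‖S (t - s) x‖ := real_inner_le_norm _ _
    _ ≤ ‖x‖ * ‖x‖ := by
      gcongr
      exact (S (t - s)).le_of_opNorm_le (hS.norm_le_one _ (sub_nonneg.2 hst)) x |>.trans_eq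
        (one_mul _)
    _ = ⟪u, S s u⟫ := by rw [hS.inner_apply_eq_norm_sq u hs, sq]

theorem monotoneOn_slope_inner_apply : MonotoneOn (slope (fun t => ⟪u, S t u⟫) 0) (Ioi 0) :=
  monotoneOn_slope_zero_of_midpoint_convex (hS.two_mul_inner_apply_add_le u)
    (hS.antitoneOn_inner_apply u)

end IsSymmContractionSemigroup

end SymmContractionSemigroup

section PositivityPreserving

variable {Q : Type*} [MeasurableSpace Q] {μ : Measure Q}

theorem MeasureTheory.L2.inner_nonneg_of_nonneg_s15 {u v : Lp ℝ 2 μ} (hu : 0 ≤ u) (hv : 0 ≤ v) :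
    0 ≤ ⟪u, v⟫ := by
  rw [L2.inner_def]
  refine integral_nonneg_of_ae ?_
  filter_upwards [(Lp.coeFn_nonneg u).2 hu, (Lp.coeFn_nonneg v).2 hv] with x hux hvx
  simpa [RCLike.inner_apply] using mul_nonneg hvx hux

theorem inner_map_self_le_inner_map_abs {T : Lp ℝ 2 μ →L[ℝ] Lp ℝ 2 μ}
    (hT : ∀ u, 0 ≤ u → 0 ≤ T u) (f : Lp ℝ 2 μ) : ⟪f, T f⟫ ≤ ⟪|f|, T |f|⟫ := by
  have hcross₁ := L2.inner_nonneg_of_nonneg_s15 (posPart_nonneg f) (hT _ (negPart_nonneg f))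
  have hcross₂ := L2.inner_nonneg_of_nonneg_s15 (negPart_nonneg f) (hT _ (posPart_nonneg f))
  have key : ⟪f⁺ - f⁻, T (f⁺ - f⁻)⟫ ≤ ⟪f⁺ + f⁻, T (f⁺ + f⁻)⟫ := by
    simp only [map_sub, map_add, inner_sub_left, inner_add_left, inner_sub_right, inner_add_right]
    linarith
  rwa [posPart_sub_negPart, posPart_add_negPart] at key

end PositivityPreserving

theorem tendsto_slope_exp_mul (b : ℝ) :
    Tendsto (slope (fun t => exp (t * b)) 0) (𝓝[>] 0) (𝓝 b) := by
  have h := ((hasDerivAt_id (0 : ℝ)).mul_const b).exp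
  simp only [id, zero_mul, exp_zero, one_mul] at h
  exact (hasDerivAt_iff_tendsto_slope.1 h).mono_left (nhdsGT_le_nhdsNE 0)

theorem tendsto_sub_exp_mul_div_iff {φ : ℝ → ℝ} {b q : ℝ} :
    Tendsto (fun t => (φ 0 - exp (t * b) * φ t) / t) (𝓝[>] 0) (𝓝 q) ↔
      Tendsto (slope φ 0) (𝓝[>] 0) (𝓝 (-(q + b * φ 0))) := by
  have hexp : Tendsto (fun t => exp (t * b)) (𝓝[>] 0) (𝓝 1) := by
    simpa using ((continuous_id.mul continuous_const).rexp.tendsto 0).mono_left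
      (nhdsWithin_le_nhds (s := Ioi (0 : ℝ)))
  have hid (t : ℝ) (ht : t ∈ Ioi 0) : (φ 0 - exp (t * b) * φ t) / t =
      -(exp (t * b) * slope φ 0 t) - φ 0 * slope (fun t => exp (t * b)) 0 t := by
    simp only [slope_def_field, zero_mul, exp_zero, sub_zero]
    field_simp [(mem_Ioi.1 ht).ne']
    ring
  constructor
  · intro hQ
    have hlim := ((hQ.add ((tendsto_slope_exp_mul b).const_mul (φ 0))).div hexp one_ne_zero).neg
    rw [div_one, mul_comm (φ 0)] at hlim
    refine hlim.congr' (eventually_nhdsWithin_of_forall fun t ht => ?_)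
    simp only [Pi.div_apply, hid t ht]
    field_simp
    ring
  · intro hσ
    have hlim := (hexp.mul hσ).neg.sub ((tendsto_slope_exp_mul b).const_mul (φ 0))
    convert hlim.congr' (eventually_nhdsWithin_of_forall fun t ht => (hid t ht).symm) using 2
    ring

theorem MonotoneOn.exists_tendsto_nhdsGT_of_le {σ τ : ℝ → ℝ} {a L : ℝ}
    (hσ : MonotoneOn σ (Ioi a)) (hle : ∀ t ∈ Ioi a, τ t ≤ σ t)
    (hτ : Tendsto τ (𝓝[>] a) (𝓝 L)) : ∃ L', L ≤ L' ∧ Tendsto σ (𝓝[>] a) (𝓝 L') := by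
  obtain ⟨c, hac, hc⟩ := mem_nhdsGT_iff_exists_Ioo_subset.1 (hτ.eventually_const_le (sub_one_lt L))
  have hbdd : BddBelow (σ '' Ioo a c) :=
    ⟨L - 1, forall_mem_image.2 fun t ht => (hc ht).trans (hle t ht.1)⟩
  have hlim := hσ.mono Ioo_subset_Ioi_self |>.tendsto_nhdsWithin_Ioo_right (nonempty_Ioo.2 hac) hbdd
  exact ⟨_, le_of_tendsto_of_tendsto hτ hlim (eventually_nhdsWithin_of_forall hle), hlim⟩

namespace HeatSemigroup

variable {Q : Type*} [MeasurableSpace Q] {μ : Measure Q}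

noncomputable def rescaled (H : HeatSemigroup μ) (b t : ℝ) : Lp ℝ 2 μ →L[ℝ] Lp ℝ 2 μ :=
  if 0 < t then exp (-(t * b)) • H.P t else ContinuousLinearMap.id ℝ _

theorem rescaled_of_pos (H : HeatSemigroup μ) (b : ℝ) {t : ℝ} (ht : 0 < t) :
    H.rescaled b t = exp (-(t * b)) • H.P t :=
  if_pos ht

theorem rescaled_zero (H : HeatSemigroup μ) (b : ℝ) :
    H.rescaled b 0 = ContinuousLinearMap.id ℝ _ :=
  if_neg (lt_irrefl 0)

theorem isSymmContractionSemigroup_rescaled (H : HeatSemigroup μ) {b : ℝ}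
    (hb : ∀ t > 0, ‖H.P t‖ ≤ exp (t * b)) : IsSymmContractionSemigroup (H.rescaled b) where
  map_zero := H.rescaled_zero b
  map_add s t hs ht := by
    rcases hs.eq_or_lt with rfl | hs
    · rw [zero_add, rescaled_zero, ContinuousLinearMap.id_comp]
    rcases ht.eq_or_lt with rfl | ht
    · rw [add_zero, rescaled_zero, ContinuousLinearMap.comp_id]
    rw [rescaled_of_pos _ _ hs, rescaled_of_pos _ _ ht, rescaled_of_pos _ _ (add_pos hs ht),
      ContinuousLinearMap.smul_comp, ContinuousLinearMap.comp_smul, smul_smul, ← exp_add,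
      H.semigroup s hs t ht]
    ring_nf
  inner_map_left t ht x y := by
    rcases ht.eq_or_lt with rfl | ht
    · simp [rescaled_zero]
    simp [rescaled_of_pos _ _ ht, inner_smul_left, inner_smul_right, H.selfAdj t ht]
  norm_le_one t ht := by
    rcases ht.eq_or_lt with rfl | ht
    · rw [rescaled_zero]
      exact ContinuousLinearMap.norm_id_le
    rw [rescaled_of_pos _ _ ht, norm_smul, norm_of_nonneg (exp_pos _).le, exp_neg,
      inv_mul_le_one₀ (exp_pos _)]
    exact hb t ht

theorem exp_mul_inner_rescaled (H : HeatSemigroup μ) (b : ℝ) {t : ℝ} (ht : 0 < t)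
    (u : Lp ℝ 2 μ) : exp (t * b) * ⟪u, H.rescaled b t u⟫ = ⟪u, H.P t u⟫ := by
  rw [rescaled_of_pos _ _ ht, smul_apply, inner_smul_right, ← mul_assoc, ← exp_add,
    add_neg_cancel, exp_zero, one_mul]

theorem slope_inner_rescaled_le_abs (H : HeatSemigroup μ) (b : ℝ) (f : Lp ℝ 2 μ) {t : ℝ}
    (ht : 0 < t) : slope (fun t => ⟪f, H.rescaled b t f⟫) 0 t ≤
      slope (fun t => ⟪|f|, H.rescaled b t |f|⟫) 0 t := by
  have hpos : ⟪f, H.rescaled b t f⟫ ≤ ⟪|f|, H.rescaled b t |f|⟫ := by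
    simp only [rescaled_of_pos _ _ ht, smul_apply, inner_smul_right]
    exact mul_le_mul_of_nonneg_left (inner_map_self_le_inner_map_abs (H.posPres t ht) f)
      (exp_pos _).le
  have hzero : ⟪|f|, H.rescaled b 0 |f|⟫ = ⟪f, H.rescaled b 0 f⟫ := by
    simp only [rescaled_zero, ContinuousLinearMap.id_apply, real_inner_self_eq_norm_sq,
      norm_abs_eq_norm]
  rw [slope_def_field, slope_def_field, hzero]
  gcongr

end HeatSemigroup

theorem stmt15_general {Q : Type*} [MeasurableSpace Q] (μ : Measure Q)
    (H : HeatSemigroup μ) (f : Lp ℝ 2 μ) (qf : ℝ)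
    (hf : Tendsto (fun t : ℝ => (inner ℝ f (f - H.P t f) : ℝ) / t)
      (nhdsWithin 0 (Set.Ioi 0)) (nhds qf)) :
    ∃ q : ℝ,
      Tendsto (fun t : ℝ => (inner ℝ |f| (|f| - H.P t |f|) : ℝ) / t)
        (nhdsWithin 0 (Set.Ioi 0)) (nhds q) ∧
      q ≤ qf := by
  obtain ⟨b, hb⟩ := H.bddBelow
  set φ : Lp ℝ 2 μ → ℝ → ℝ := fun u t => ⟪u, H.rescaled b t u⟫
  have hform (u : Lp ℝ 2 μ) : (fun t => (φ u 0 - exp (t * b) * φ u t) / t) =ᶠ[𝓝[>] 0]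
      fun t => ⟪u, u - H.P t u⟫ / t :=
    eventually_nhdsWithin_of_forall fun t ht => by
      simp only [φ, H.rescaled_zero, ContinuousLinearMap.id_apply, H.exp_mul_inner_rescaled b ht,
        inner_sub_right]
  have hφ_zero : φ |f| 0 = φ f 0 := by
    simp only [φ, H.rescaled_zero, ContinuousLinearMap.id_apply, real_inner_self_eq_norm_sq,
      norm_abs_eq_norm]
  have hmono := (H.isSymmContractionSemigroup_rescaled hb).monotoneOn_slope_inner_apply |f|
  obtain ⟨L, hL, hlim⟩ := hmono.exists_tendsto_nhdsGT_of_le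
    (fun t ht => H.slope_inner_rescaled_le_abs b f ht)
    (tendsto_sub_exp_mul_div_iff.1 (hf.congr' (hform f).symm))
  refine ⟨-(L + b * φ |f| 0), (tendsto_sub_exp_mul_div_iff.2 ?_).congr' (hform |f|), ?_⟩
  · simpa using hlim
  · rw [hφ_zero]
    linarith

/-- Form-domain version of Lemma 2: for a semibounded self-adjoint `h` on a
real `L²`-space with positivity-preserving semigroup, if `f ∈ Q(h)` (membership and the
form value `qf` encoded by convergence of `t⁻¹⟨f,(1-e^{-th})f⟩` as `t → 0⁺`), then
`|f| ∈ Q(h)` and `(|f|, h |f|) ≤ (f, h f)`. -/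
theorem stmt15 {Q : Type*} [MeasurableSpace Q] (μ : Measure Q) [SigmaFinite μ]
    (H : HeatSemigroup μ) (f : Lp ℝ 2 μ) (qf : ℝ)
    (hf : Tendsto (fun t : ℝ => (inner ℝ f (f - H.P t f) : ℝ) / t)
      (nhdsWithin 0 (Set.Ioi 0)) (nhds qf)) :
    ∃ q : ℝ,
      Tendsto (fun t : ℝ => (inner ℝ |f| (|f| - H.P t |f|) : ℝ) / t)
        (nhdsWithin 0 (Set.Ioi 0)) (nhds q) ∧
      q ≤ qf :=
  stmt15_general μ H f qf hf
end

section
/- Let h be a self-adjoint operator bounded below on L² with positivity-preserving semigroup. For nonnegative f₁, f₂ ∈ Q(h) with f₁ ≤ f₂ pointwise a.e., it does NOT follow in general that (f₁, h f₁) ≤ (f₂, h f₂); however, the diamagnetic-type inequality (|f|, h|f|) ≤ ⟨f, hf⟩ holds for all f ∈ dom(h). -/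
open MeasureTheory Filter Topology

lemma smul_nonneg_Lp {Q : Type*} [MeasurableSpace Q] {μ : Measure Q} {s : ℝ} {g : Lp ℝ 2 μ}
    (hs : 0 ≤ s) (hg : 0 ≤ g) : 0 ≤ s • g := by
  rw [← MeasureTheory.Lp.coeFn_nonneg]
  filter_upwards [Lp.coeFn_smul s g, (Lp.coeFn_nonneg g).2 hg] with x h1 h2
  rw [h1]; exact mul_nonneg hs h2

lemma inner_nonneg_of_nonneg {Q : Type*} [MeasurableSpace Q] {μ : Measure Q}
    (g h : Lp ℝ 2 μ) (hg : 0 ≤ g) (hh : 0 ≤ h) : 0 ≤ (inner ℝ g h : ℝ) := by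
  rw [MeasureTheory.L2.inner_def]
  refine integral_nonneg_of_ae ?_
  filter_upwards [(Lp.coeFn_nonneg g).2 hg, (Lp.coeFn_nonneg h).2 hh] with x h1 h2
  simpa [RCLike.inner_apply] using mul_nonneg h2 h1

lemma vIcc : (volume : Measure ℝ) (Set.Icc 0 1) ≠ ⊤ := by simp [Real.volume_Icc]

noncomputable def eInd : Lp ℝ 2 (volume : Measure ℝ) :=
  indicatorConstLp 2 (measurableSet_Icc (a := (0:ℝ)) (b := 1)) vIcc (1 : ℝ)

lemma eInd_nonneg : 0 ≤ eInd := by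
  rw [← MeasureTheory.Lp.coeFn_nonneg]
  filter_upwards [indicatorConstLp_coeFn (p := 2)
    (hs := measurableSet_Icc (a := (0:ℝ)) (b := 1)) (hμs := vIcc) (c := (1:ℝ))] with x hx
  rw [eInd, hx]
  exact Set.indicator_nonneg (fun _ _ => zero_le_one) x

lemma eInd_norm : ‖eInd‖ = 1 := by
  rw [eInd, norm_indicatorConstLp (by norm_num) (by norm_num)]
  simp [Real.volume_Icc]

lemma eInd_inner_self : (inner ℝ eInd eInd : ℝ) = 1 := by
  rw [real_inner_self_eq_norm_sq, eInd_norm]; norm_num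

noncomputable def Kop : Lp ℝ 2 (volume : Measure ℝ) →L[ℝ] Lp ℝ 2 (volume : Measure ℝ) :=
  (innerSL ℝ eInd).smulRight eInd

lemma Kop_apply (u : Lp ℝ 2 (volume : Measure ℝ)) : Kop u = (inner ℝ eInd u : ℝ) • eInd := rfl

noncomputable def Pa (t : ℝ) : Lp ℝ 2 (volume : Measure ℝ) →L[ℝ] Lp ℝ 2 (volume : Measure ℝ) :=
  ContinuousLinearMap.id ℝ _ + (Real.exp t - 1) • Kop

lemma Pa_apply (t : ℝ) (u : Lp ℝ 2 (volume : Measure ℝ)) :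
    Pa t u = u + (Real.exp t - 1) • ((inner ℝ eInd u : ℝ) • eInd) := rfl

lemma Pa_selfAdj (t : ℝ) (u v : Lp ℝ 2 (volume : Measure ℝ)) :
    (inner ℝ (Pa t u) v : ℝ) = inner ℝ u (Pa t v) := by
  rw [Pa_apply, Pa_apply, inner_add_left, inner_add_right, real_inner_smul_left,
    real_inner_smul_right, real_inner_smul_left, real_inner_smul_right]
  rw [real_inner_comm u eInd]
  ring

lemma Pa_posPres (t : ℝ) (ht : 0 < t) (u : Lp ℝ 2 (volume : Measure ℝ)) (hu : 0 ≤ u) :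
    0 ≤ Pa t u := by
  rw [Pa_apply]
  have h1 : 0 ≤ (Real.exp t - 1) • ((inner ℝ eInd u : ℝ) • eInd) := by
    refine smul_nonneg_Lp (by nlinarith [Real.add_one_le_exp t]) ?_
    exact smul_nonneg_Lp (inner_nonneg_of_nonneg _ _ eInd_nonneg hu) eInd_nonneg
  calc (0 : Lp ℝ 2 (volume : Measure ℝ)) ≤ u := hu
    _ ≤ _ := le_add_of_nonneg_right h1

lemma Pa_semigroup (s : ℝ) (t : ℝ) : Pa (s + t) = (Pa s).comp (Pa t) := by
  refine ContinuousLinearMap.ext fun u => ?_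
  rw [ContinuousLinearMap.comp_apply, Pa_apply, Pa_apply, Pa_apply]
  rw [inner_add_right, real_inner_smul_right, real_inner_smul_right, eInd_inner_self]
  rw [Real.exp_add]
  module

lemma Pa_norm_le (t : ℝ) (ht : 0 < t) : ‖Pa t‖ ≤ Real.exp (t * 1) := by
  refine ContinuousLinearMap.opNorm_le_bound _ (Real.exp_nonneg _) fun u => ?_
  rw [Pa_apply]
  have h1 : ‖(Real.exp t - 1) • ((inner ℝ eInd u : ℝ) • eInd)‖ ≤ (Real.exp t - 1) * ‖u‖ := by
    rw [norm_smul, norm_smul, eInd_norm, mul_one, Real.norm_eq_abs, Real.norm_eq_abs]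
    have he : (1:ℝ) ≤ Real.exp t := by nlinarith [Real.add_one_le_exp t]
    rw [abs_of_nonneg (by linarith)]
    refine mul_le_mul_of_nonneg_left ?_ (by linarith)
    calc |(inner ℝ eInd u : ℝ)| ≤ ‖eInd‖ * ‖u‖ := abs_real_inner_le_norm _ _
      _ = ‖u‖ := by rw [eInd_norm, one_mul]
  calc ‖u + (Real.exp t - 1) • ((inner ℝ eInd u : ℝ) • eInd)‖
      ≤ ‖u‖ + (Real.exp t - 1) * ‖u‖ := (norm_add_le _ _).trans (by linarith)
    _ = Real.exp t * ‖u‖ := by ring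
    _ = Real.exp (t * 1) * ‖u‖ := by rw [mul_one]

noncomputable def Ha : HeatSemigroup (volume : Measure ℝ) where
  P := Pa
  selfAdj := fun t _ u v => Pa_selfAdj t u v
  posPres := fun t ht u hu => Pa_posPres t ht u hu
  semigroup := fun s _ t _ => Pa_semigroup s t
  bddBelow := ⟨1, fun t ht => Pa_norm_le t ht⟩

lemma slope_exp_tendsto : Tendsto (fun t : ℝ => (Real.exp t - 1) / t)
    (nhdsWithin 0 (Set.Ioi 0)) (nhds 1) := by
  have h := (Real.hasDerivAt_exp 0).tendsto_slope_zero_right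
  simpa [Real.exp_zero, div_eq_inv_mul] using h

lemma parta : ∃ (H : HeatSemigroup (volume : Measure ℝ)) (f₁ f₂ : Lp ℝ 2 (volume : Measure ℝ))
        (q₁ q₂ : ℝ),
      0 ≤ f₁ ∧ f₁ ≤ f₂ ∧
      Tendsto (fun t : ℝ => (inner ℝ f₁ (f₁ - H.P t f₁) : ℝ) / t)
        (nhdsWithin 0 (Set.Ioi 0)) (nhds q₁) ∧
      Tendsto (fun t : ℝ => (inner ℝ f₂ (f₂ - H.P t f₂) : ℝ) / t)
        (nhdsWithin 0 (Set.Ioi 0)) (nhds q₂) ∧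
      q₂ < q₁ := by
  refine ⟨Ha, 0, eInd, 0, -1, le_refl _, eInd_nonneg, ?_, ?_, by norm_num⟩
  · have : (fun t : ℝ => (inner ℝ (0 : Lp ℝ 2 (volume : Measure ℝ))
        ((0 : Lp ℝ 2 (volume : Measure ℝ)) - Ha.P t 0) : ℝ) / t) = fun _ => 0 := by
      funext t
      simp
    rw [this]
    exact tendsto_const_nhds
  · have heq : ∀ t : ℝ, (inner ℝ eInd (eInd - Ha.P t eInd) : ℝ) / t = -((Real.exp t - 1) / t) := by
      intro t
      have : Ha.P t eInd = eInd + (Real.exp t - 1) • ((inner ℝ eInd eInd : ℝ) • eInd) := rfl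
      rw [this, eInd_inner_self, one_smul]
      rw [show eInd - (eInd + (Real.exp t - 1) • eInd) = -((Real.exp t - 1) • eInd) by abel]
      rw [inner_neg_right, real_inner_smul_right, eInd_inner_self]
      ring
    simp_rw [heq]
    simpa using slope_exp_tendsto.neg



lemma seq_slope (A : ℕ → ℝ) (hmono : ∀ k, A (k+1) ≤ A k) (hnn : ∀ k, 0 ≤ A k)
    (hlog : ∀ k, A (k+1)^2 ≤ A k * A (k+2)) :
    ∀ k m : ℕ, k ≤ m → (k:ℝ) * (A 0 - A m) ≤ (m:ℝ) * (A 0 - A k) := by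
  have hconv : ∀ k, 2 * A (k+1) ≤ A k + A (k+2) := by
    intro k
    nlinarith [hlog k, hnn k, hnn (k+1), hnn (k+2), sq_nonneg (A k - A (k+2)),
      sq_nonneg (A k + A (k+2) - 2 * A (k+1)), hmono k, hmono (k+1)]
  have hd : Monotone (fun k => A (k+1) - A k) :=
    monotone_nat_of_le_succ (fun k => by have := hconv k; linarith)
  have key : ∀ m k : ℕ, k ≤ m + 1 → (k:ℝ) * (A m - A (m+1)) ≤ A 0 - A k := by
    intro m k
    induction k with
    | zero => intro _; simp
    | succ n ih =>
      intro hn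
      have h1 : (n:ℝ) * (A m - A (m+1)) ≤ A 0 - A n := ih (Nat.le_of_succ_le hn)
      have h2 : A m - A (m+1) ≤ A n - A (n+1) := by
        have := hd (Nat.lt_succ_iff.mp hn)
        simp only at this; linarith
      push_cast
      nlinarith
  intro k m hkm
  induction m with
  | zero => interval_cases k; simp
  | succ n ih =>
    rcases Nat.lt_succ_iff_lt_or_eq.mp (Nat.lt_succ_of_le hkm) with h | h
    · have h1 := ih (Nat.lt_succ_iff.mp h)
      have h2 := key n k (by omega)
      push_cast at h1 h2 ⊢
      nlinarith
    · subst h; simp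



namespace HeatSemigroup
variable {Q : Type*} [MeasurableSpace Q] {μ : Measure Q} (H : HeatSemigroup μ)

noncomputable def Qop (b t : ℝ) : Lp ℝ 2 μ →L[ℝ] Lp ℝ 2 μ :=
  Real.exp (-(t*b)) • H.P t

lemma Qop_apply (b t : ℝ) (x : Lp ℝ 2 μ) : H.Qop b t x = Real.exp (-(t*b)) • H.P t x := rfl

variable {b : ℝ} (hb : ∀ t > 0, ‖H.P t‖ ≤ Real.exp (t * b))

include hb in
lemma Qop_norm_le {t : ℝ} (ht : 0 < t) : ‖H.Qop b t‖ ≤ 1 := by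
  rw [Qop]
  calc ‖Real.exp (-(t*b)) • H.P t‖ ≤ ‖Real.exp (-(t*b))‖ * ‖H.P t‖ := norm_smul_le (Real.exp (-(t*b))) (H.P t)
    _ ≤ Real.exp (-(t*b)) * Real.exp (t*b) := by
        rw [Real.norm_eq_abs, abs_of_nonneg (Real.exp_nonneg _)]
        exact mul_le_mul_of_nonneg_left (hb t ht) (Real.exp_nonneg _)
    _ = 1 := by rw [← Real.exp_add]; simp

include hb in
lemma Qop_norm_apply_le {t : ℝ} (ht : 0 < t) (x : Lp ℝ 2 μ) : ‖H.Qop b t x‖ ≤ ‖x‖ := by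
  calc ‖H.Qop b t x‖ ≤ ‖H.Qop b t‖ * ‖x‖ := (H.Qop b t).le_opNorm x
    _ ≤ 1 * ‖x‖ := mul_le_mul_of_nonneg_right (H.Qop_norm_le hb ht) (norm_nonneg x)
    _ = ‖x‖ := one_mul _

lemma Qop_sa {t : ℝ} (ht : 0 < t) (x y : Lp ℝ 2 μ) :
    (inner ℝ (H.Qop b t x) y : ℝ) = inner ℝ x (H.Qop b t y) := by
  rw [Qop_apply, Qop_apply, real_inner_smul_left, real_inner_smul_right, H.selfAdj t ht]

lemma Qop_add {s t : ℝ} (hs : 0 < s) (ht : 0 < t) (x : Lp ℝ 2 μ) :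
    H.Qop b (s+t) x = H.Qop b s (H.Qop b t x) := by
  rw [Qop_apply, Qop_apply, Qop_apply, H.semigroup s hs t ht]
  simp only [ContinuousLinearMap.comp_apply, (H.P s).map_smul, smul_smul]
  congr 1
  rw [← Real.exp_add]
  ring_nf

lemma inner_Qop_add {r s : ℝ} (hr : 0 < r) (hs : 0 < s) (x : Lp ℝ 2 μ) :
    (inner ℝ (H.Qop b r x) (H.Qop b s x) : ℝ) = inner ℝ x (H.Qop b (r+s) x) := by
  rw [H.Qop_sa hr, ← H.Qop_add hr hs]

noncomputable def aF (b : ℝ) (u : Lp ℝ 2 μ) : ℝ → ℝ := fun t => (inner ℝ u (H.Qop b t u) : ℝ)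

variable (u : Lp ℝ 2 μ)

lemma aF_eq_sq {t : ℝ} (ht : 0 < t) :
    H.aF b u t = (inner ℝ (H.Qop b (t/2) u) (H.Qop b (t/2) u) : ℝ) := by
  rw [aF, H.inner_Qop_add (by linarith) (by linarith) u]
  norm_num

lemma aF_nonneg {t : ℝ} (ht : 0 < t) : 0 ≤ H.aF b u t := by
  rw [H.aF_eq_sq u ht]
  exact real_inner_self_nonneg

include hb in
lemma aF_le {t : ℝ} (ht : 0 < t) : H.aF b u t ≤ (inner ℝ u u : ℝ) := by
  rw [aF, real_inner_self_eq_norm_mul_norm]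
  calc (inner ℝ u (H.Qop b t u) : ℝ) ≤ ‖u‖ * ‖H.Qop b t u‖ := real_inner_le_norm _ _
    _ ≤ ‖u‖ * ‖u‖ := mul_le_mul_of_nonneg_left (H.Qop_norm_apply_le hb ht u) (norm_nonneg u)

include hb in
lemma aF_anti : AntitoneOn (H.aF b u) (Set.Ioi 0) := by
  intro s hs t ht hst
  simp only [Set.mem_Ioi] at hs ht
  rcases eq_or_lt_of_le hst with rfl | hlt
  · exact le_refl _
  rw [H.aF_eq_sq u ht, H.aF_eq_sq u hs,
    real_inner_self_eq_norm_mul_norm, real_inner_self_eq_norm_mul_norm]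
  have key : ‖H.Qop b (t/2) u‖ ≤ ‖H.Qop b (s/2) u‖ := by
    have hsplit : t/2 = (t-s)/2 + s/2 := by ring
    rw [hsplit, H.Qop_add (by linarith) (by linarith)]
    exact H.Qop_norm_apply_le hb (by linarith) _
  exact mul_le_mul key key (norm_nonneg _) (norm_nonneg _)

lemma aF_logconv {r s : ℝ} (hr : 0 < r) (hs : 0 < s) :
    (H.aF b u (r+s))^2 ≤ H.aF b u (2*r) * H.aF b u (2*s) := by
  have h1 : H.aF b u (r+s) = (inner ℝ (H.Qop b r u) (H.Qop b s u) : ℝ) :=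
    (H.inner_Qop_add hr hs u).symm
  have h2 : H.aF b u (2*r) = (inner ℝ (H.Qop b r u) (H.Qop b r u) : ℝ) := by
    rw [show 2*r = r + r by ring]; exact (H.inner_Qop_add hr hr u).symm
  have h3 : H.aF b u (2*s) = (inner ℝ (H.Qop b s u) (H.Qop b s u) : ℝ) := by
    rw [show 2*s = s + s by ring]; exact (H.inner_Qop_add hs hs u).symm
  rw [h1, h2, h3, pow_two]
  exact real_inner_mul_inner_self_le _ _

lemma aF_logconv0 {s : ℝ} (hs : 0 < s) :
    (H.aF b u s)^2 ≤ (inner ℝ u u : ℝ) * H.aF b u (2*s) := by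
  have h3 : H.aF b u (2*s) = (inner ℝ (H.Qop b s u) (H.Qop b s u) : ℝ) := by
    rw [show 2*s = s + s by ring]; exact (H.inner_Qop_add hs hs u).symm
  rw [aF, h3, pow_two]
  exact real_inner_mul_inner_self_le _ _

include hb in
lemma N_ratio {s t : ℝ} (hs : 0 < s) (hst : s ≤ t) :
    s * ((inner ℝ u u : ℝ) - H.aF b u t) ≤ t * ((inner ℝ u u : ℝ) - H.aF b u s) := by
  have ht : 0 < t := lt_of_lt_of_le hs hst
  -- rational step
  have hrat : ∀ k m : ℕ, 0 < k → k ≤ m →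
      (k:ℝ) * ((inner ℝ u u : ℝ) - H.aF b u t) ≤
        (m:ℝ) * ((inner ℝ u u : ℝ) - H.aF b u ((k*t)/m)) := by
    intro k m hk hkm
    have hm : 0 < m := lt_of_lt_of_le hk hkm
    set δ := t / m with hδdef
    have hδ : 0 < δ := div_pos ht (by exact_mod_cast hm)
    set A : ℕ → ℝ := fun j => if j = 0 then (inner ℝ u u : ℝ) else H.aF b u (j * δ) with hA
    have hAval : ∀ j : ℕ, 0 < j → A j = H.aF b u (j * δ) := by
      intro j hj; simp [hA, Nat.pos_iff_ne_zero.mp hj]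
    have hA0 : A 0 = (inner ℝ u u : ℝ) := by simp [hA]
    have hmono : ∀ j, A (j+1) ≤ A j := by
      intro j
      rcases Nat.eq_zero_or_pos j with rfl | hj
      · rw [hAval 1 one_pos, hA0]
        exact H.aF_le hb u (by simpa using hδ)
      · rw [hAval _ (Nat.succ_pos j), hAval _ hj]
        refine H.aF_anti hb u ?_ ?_ ?_
        · exact Set.mem_Ioi.mpr (by positivity)
        · have : (0:ℝ) < (j+1) * δ := by positivity
          exact Set.mem_Ioi.mpr (by push_cast; positivity)
        · have : (j:ℝ) ≤ (j:ℝ) + 1 := by linarith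
          push_cast
          nlinarith
    have hnn : ∀ j, 0 ≤ A j := by
      intro j
      rcases Nat.eq_zero_or_pos j with rfl | hj
      · rw [hA0]; exact real_inner_self_nonneg
      · rw [hAval _ hj]
        exact H.aF_nonneg u (by positivity)
    have hlog : ∀ j, A (j+1)^2 ≤ A j * A (j+2) := by
      intro j
      rcases Nat.eq_zero_or_pos j with rfl | hj
      · rw [hAval 1 one_pos, hA0, hAval 2 two_pos]
        have := H.aF_logconv0 (b := b) u (s := δ) hδ
        calc H.aF b u ((1:ℕ) * δ)^2 = H.aF b u δ ^ 2 := by norm_num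
          _ ≤ (inner ℝ u u : ℝ) * H.aF b u (2*δ) := this
          _ = (inner ℝ u u : ℝ) * H.aF b u ((2:ℕ)*δ) := by norm_num
      · rw [hAval _ (Nat.succ_pos j), hAval _ hj, hAval _ (by omega)]
        have hr : (0:ℝ) < j * δ / 2 := by positivity
        have hs2 : (0:ℝ) < (j+2) * δ / 2 := by positivity
        have := H.aF_logconv (b := b) u hr hs2
        have e1 : (j:ℝ) * δ / 2 + ((j:ℝ)+2) * δ / 2 = ((j:ℝ)+1) * δ := by ring
        have e2 : 2 * ((j:ℝ) * δ / 2) = (j:ℝ) * δ := by ring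
        have e3 : 2 * (((j:ℝ)+2) * δ / 2) = ((j:ℝ)+2) * δ := by ring
        rw [e1, e2, e3] at this
        push_cast
        convert this using 3 <;> push_cast <;> ring
    have := seq_slope A hmono hnn hlog k m hkm
    rw [hA0, hAval m hm, hAval k hk] at this
    have em : (m:ℝ) * δ = t := by
      rw [hδdef]; field_simp [(Nat.cast_pos.mpr hm).ne']
    have ek : (k:ℝ) * δ = k * t / m := by
      rw [hδdef]; ring
    rw [em, ek] at this
    exact this
  -- density of rationals
  have hNt : 0 ≤ (inner ℝ u u : ℝ) - H.aF b u t := sub_nonneg.mpr (H.aF_le hb u ht)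
  have hNs : 0 ≤ (inner ℝ u u : ℝ) - H.aF b u s := sub_nonneg.mpr (H.aF_le hb u hs)
  set Nt := (inner ℝ u u : ℝ) - H.aF b u t with hNtdef
  set Ns := (inner ℝ u u : ℝ) - H.aF b u s with hNsdef
  by_contra hcon
  push_neg at hcon
  have hNtpos : 0 < Nt := by nlinarith
  have hlt : Ns / Nt < s / t := by
    rw [div_lt_div_iff₀ hNtpos ht]
    nlinarith
  obtain ⟨q, hq1, hq2⟩ := exists_rat_btwn hlt
  have hqpos : 0 < q := by
    have : (0:ℝ) ≤ Ns / Nt := div_nonneg hNs hNtpos.le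
    exact_mod_cast lt_of_le_of_lt this hq1
  have hq3 : (q:ℝ) ≤ 1 := by
    have hst1 : s / t ≤ 1 := div_le_one_of_le₀ hst ht.le
    linarith
  set k := q.num.toNat with hk
  set m := q.den with hm
  have hknum : (k:ℝ) = (q.num:ℝ) := by
    rw [hk]
    exact_mod_cast Int.toNat_of_nonneg (Rat.num_nonneg.mpr hqpos.le)
  have hmpos : 0 < m := q.pos
  have hqkm : (q:ℝ) = (k:ℝ) / (m:ℝ) := by
    rw [hknum, hm, Rat.cast_def]
  have hkpos : 0 < k := by
    rw [hk]
    have := Rat.num_pos.mpr hqpos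
    omega
  have hkm : k ≤ m := by
    have h1 : (k:ℝ) / (m:ℝ) ≤ 1 := by rw [← hqkm]; exact hq3
    have hm0 : (0:ℝ) < (m:ℝ) := by exact_mod_cast hmpos
    have := (div_le_one hm0).mp h1
    exact_mod_cast this
  have hmain := hrat k m hkpos hkm
  -- k*t/m ≤ s and > 0
  have hktm_pos : 0 < (k:ℝ)*t/m := by positivity
  have hktm_le : (k:ℝ)*t/m ≤ s := by
    have : (q:ℝ) < s / t := hq2
    rw [hqkm] at this
    have hm0 : (0:ℝ) < (m:ℝ) := by exact_mod_cast hmpos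
    rw [div_lt_div_iff₀ hm0 ht] at this
    calc (k:ℝ)*t/m = (k:ℝ)*t / m := rfl
      _ ≤ s := by rw [div_le_iff₀ hm0]; nlinarith
  have hanti : H.aF b u ((k:ℝ)*t/m) ≥ H.aF b u s :=
    H.aF_anti hb u (Set.mem_Ioi.mpr hktm_pos) (Set.mem_Ioi.mpr hs) hktm_le
  have hfin : (k:ℝ) * Nt ≤ (m:ℝ) * Ns := by
    calc (k:ℝ) * Nt ≤ (m:ℝ) * ((inner ℝ u u : ℝ) - H.aF b u ((k:ℝ)*t/m)) := by
          convert hmain using 4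
      _ ≤ (m:ℝ) * Ns := by
          apply mul_le_mul_of_nonneg_left _ (by positivity)
          rw [hNsdef]; linarith
  -- contradiction with q > Ns/Nt
  have hm0 : (0:ℝ) < (m:ℝ) := by exact_mod_cast hmpos
  have : Ns / Nt < (k:ℝ)/(m:ℝ) := by rw [← hqkm]; exact hq1
  rw [div_lt_div_iff₀ hNtpos hm0] at this
  nlinarith

omit hb

lemma kato_inner (T : Lp ℝ 2 μ →L[ℝ] Lp ℝ 2 μ) (hT : ∀ w : Lp ℝ 2 μ, 0 ≤ w → 0 ≤ T w)
    (f : Lp ℝ 2 μ) : (inner ℝ f (T f) : ℝ) ≤ (inner ℝ |f| (T |f|) : ℝ) := by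
  have hf : f⁺ - f⁻ = f := posPart_sub_negPart f
  have habs : f⁺ + f⁻ = |f| := posPart_add_negPart f
  have h1 : (0:ℝ) ≤ inner ℝ (f⁺) (T (f⁻)) :=
    inner_nonneg_of_nonneg _ _ (posPart_nonneg f) (hT _ (negPart_nonneg f))
  have h2 : (0:ℝ) ≤ inner ℝ (f⁻) (T (f⁺)) :=
    inner_nonneg_of_nonneg _ _ (negPart_nonneg f) (hT _ (posPart_nonneg f))
  conv_lhs => rw [← hf]
  conv_rhs => rw [show |f| = f⁺ + f⁻ from habs.symm]
  rw [map_sub, map_add, inner_sub_left, inner_sub_right, inner_sub_right,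
    inner_add_left, inner_add_right, inner_add_right]
  linarith

end HeatSemigroup

section PartB
open MeasureTheory Filter Topology
variable {Q : Type} [MeasurableSpace Q] {μ : Measure Q}

lemma partb (H : HeatSemigroup μ) (f v : Lp ℝ 2 μ)
    (hconv : Tendsto (fun t : ℝ => t⁻¹ • (f - H.P t f)) (nhdsWithin 0 (Set.Ioi 0)) (nhds v)) :
    ∃ q : ℝ,
      Tendsto (fun t : ℝ => (inner ℝ |f| (|f| - H.P t |f|) : ℝ) / t)
        (nhdsWithin 0 (Set.Ioi 0)) (nhds q) ∧
      q ≤ (inner ℝ f v : ℝ) := by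
  classical
  obtain ⟨b, hb⟩ := H.bddBelow
  set u : Lp ℝ 2 μ := |f| with hu
  have hu_inner : (inner ℝ u u : ℝ) = (inner ℝ f f : ℝ) := by
    rw [real_inner_self_eq_norm_mul_norm, real_inner_self_eq_norm_mul_norm, hu,
      norm_abs_eq_norm]
  have hkato : ∀ t : ℝ, 0 < t → (inner ℝ f (H.P t f) : ℝ) ≤ (inner ℝ u (H.P t u) : ℝ) :=
    fun t ht => HeatSemigroup.kato_inner (H.P t) (fun w hw => H.posPres t ht w hw) f
  -- P t f → f
  have htne : ∀ᶠ t : ℝ in nhdsWithin 0 (Set.Ioi 0), t ∈ Set.Ioi (0:ℝ) :=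
    self_mem_nhdsWithin
  have hid : Tendsto (fun t : ℝ => t) (nhdsWithin 0 (Set.Ioi 0)) (nhds 0) :=
    tendsto_id.mono_left nhdsWithin_le_nhds
  have hsub0 : Tendsto (fun t : ℝ => f - H.P t f) (nhdsWithin 0 (Set.Ioi 0)) (nhds 0) := by
    have h1 : Tendsto (fun t : ℝ => t • (t⁻¹ • (f - H.P t f)))
        (nhdsWithin 0 (Set.Ioi 0)) (nhds ((0:ℝ) • v)) := hid.smul hconv
    rw [zero_smul] at h1
    refine h1.congr' ?_
    filter_upwards [htne] with t ht
    rw [smul_smul, mul_inv_cancel₀ (ne_of_gt ht), one_smul]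
  have hPf : Tendsto (fun t : ℝ => H.P t f) (nhdsWithin 0 (Set.Ioi 0)) (nhds f) := by
    have h2 := (tendsto_const_nhds (x := f) (f := nhdsWithin (0:ℝ) (Set.Ioi 0))).sub hsub0
    rw [sub_zero] at h2
    exact h2.congr (fun t => sub_sub_cancel f (H.P t f))
  have hfPf : Tendsto (fun t : ℝ => (inner ℝ f (H.P t f) : ℝ))
      (nhdsWithin 0 (Set.Ioi 0)) (nhds (inner ℝ f f : ℝ)) :=
    tendsto_const_nhds.inner hPf
  -- exp factors
  have hexp : Tendsto (fun t : ℝ => Real.exp (t*b)) (nhdsWithin 0 (Set.Ioi 0)) (nhds 1) := by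
    have : Continuous fun t : ℝ => Real.exp (t*b) :=
      Real.continuous_exp.comp (continuous_id.mul continuous_const)
    have h0 := (this.tendsto 0).mono_left (nhdsWithin_le_nhds (s := Set.Ioi (0:ℝ)))
    simpa using h0
  have hexpneg : Tendsto (fun t : ℝ => Real.exp (-(t*b)))
      (nhdsWithin 0 (Set.Ioi 0)) (nhds 1) := by
    have : Continuous fun t : ℝ => Real.exp (-(t*b)) :=
      Real.continuous_exp.comp ((continuous_id.mul continuous_const).neg)
    have h0 := (this.tendsto 0).mono_left (nhdsWithin_le_nhds (s := Set.Ioi (0:ℝ)))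
    simpa using h0
  -- squeeze for ⟨u, P t u⟩
  have hupper : ∀ t : ℝ, 0 < t →
      (inner ℝ u (H.P t u) : ℝ) ≤ Real.exp (t*b) * (inner ℝ u u : ℝ) := by
    intro t ht
    calc (inner ℝ u (H.P t u) : ℝ) ≤ ‖u‖ * ‖H.P t u‖ := real_inner_le_norm _ _
      _ ≤ ‖u‖ * (Real.exp (t*b) * ‖u‖) := by
          refine mul_le_mul_of_nonneg_left ?_ (norm_nonneg u)
          calc ‖H.P t u‖ ≤ ‖H.P t‖ * ‖u‖ := (H.P t).le_opNorm u
            _ ≤ Real.exp (t*b) * ‖u‖ :=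
                mul_le_mul_of_nonneg_right (hb t ht) (norm_nonneg u)
      _ = Real.exp (t*b) * (inner ℝ u u : ℝ) := by
          rw [real_inner_self_eq_norm_mul_norm]; ring
  have haP : Tendsto (fun t : ℝ => (inner ℝ u (H.P t u) : ℝ))
      (nhdsWithin 0 (Set.Ioi 0)) (nhds (inner ℝ u u : ℝ)) := by
    refine tendsto_of_tendsto_of_tendsto_of_le_of_le' (h := fun t => Real.exp (t*b) * (inner ℝ u u : ℝ))
      (by rw [← hu_inner] at hfPf; exact hfPf) (by simpa using hexp.mul_const (inner ℝ u u : ℝ)) ?_ ?_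
    · filter_upwards [htne] with t ht
      exact hkato t ht
    · filter_upwards [htne] with t ht
      exact hupper t ht
  -- aF identities and limit
  have haF_eq : ∀ t : ℝ, H.aF b u t = Real.exp (-(t*b)) * (inner ℝ u (H.P t u) : ℝ) := by
    intro t
    rw [HeatSemigroup.aF, HeatSemigroup.Qop_apply, real_inner_smul_right]
  have haF : Tendsto (H.aF b u) (nhdsWithin 0 (Set.Ioi 0)) (nhds (inner ℝ u u : ℝ)) := by
    have := hexpneg.mul haP
    rw [one_mul] at this
    exact this.congr (fun t => (haF_eq t).symm)
  -- the functions
  set φ : ℝ → ℝ := fun t => ((inner ℝ u u : ℝ) - H.aF b u t) / t with hφdef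
  set E : ℝ → ℝ := fun t => ((1 - Real.exp (t*b)) / t) * H.aF b u t with hEdef
  set ψ : ℝ → ℝ := fun t => (inner ℝ u (u - H.P t u) : ℝ) / t with hψdef
  set F : ℝ → ℝ := fun t => (inner ℝ f (f - H.P t f) : ℝ) / t with hFdef
  have hφanti : AntitoneOn φ (Set.Ioi 0) := by
    intro s hs t ht hst
    simp only [Set.mem_Ioi] at hs ht
    rw [hφdef]
    simp only
    rw [div_le_div_iff₀ ht hs]
    have := H.N_ratio hb u hs hst
    nlinarith [this]
  have hψφ : ∀ t : ℝ, ψ t = φ t + E t := by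
    intro t
    have hPa : (inner ℝ u (H.P t u) : ℝ) = Real.exp (t*b) * H.aF b u t := by
      rw [haF_eq, ← mul_assoc, ← Real.exp_add]
      simp
    rw [hψdef, hφdef, hEdef]
    simp only
    rw [inner_sub_right, hPa, div_mul_eq_mul_div, ← add_div]
    ring_nf
  -- E limit
  have hslope : Tendsto (fun t : ℝ => t⁻¹ * (Real.exp (t*b) - 1))
      (nhdsWithin 0 (Set.Ioi 0)) (nhds b) := by
    have hD : HasDerivAt (fun t : ℝ => Real.exp (t*b)) b 0 := by
      have h1 : HasDerivAt (fun t : ℝ => t*b) b 0 := hasDerivAt_mul_const b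
      simpa using h1.exp
    have := hD.tendsto_slope_zero_right
    simpa using this
  have hE : Tendsto E (nhdsWithin 0 (Set.Ioi 0)) (nhds (-b * (inner ℝ u u : ℝ))) := by
    have h1 : Tendsto (fun t : ℝ => -(t⁻¹ * (Real.exp (t*b) - 1)) * H.aF b u t)
        (nhdsWithin 0 (Set.Ioi 0)) (nhds (-b * (inner ℝ u u : ℝ))) := hslope.neg.mul haF
    refine h1.congr (fun t => ?_)
    rw [hEdef]
    simp only
    rw [div_eq_inv_mul]
    ring_nf
  -- F limit
  have hF : Tendsto F (nhdsWithin 0 (Set.Ioi 0)) (nhds (inner ℝ f v : ℝ)) := by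
    have h1 : Tendsto (fun t : ℝ => (inner ℝ f (t⁻¹ • (f - H.P t f)) : ℝ))
        (nhdsWithin 0 (Set.Ioi 0)) (nhds (inner ℝ f v : ℝ)) := tendsto_const_nhds.inner hconv
    refine h1.congr (fun t => ?_)
    rw [real_inner_smul_right, hFdef]
    simp only
    rw [div_eq_inv_mul]
  -- ψ ≤ F on Ioi 0
  have hψF : ∀ t : ℝ, 0 < t → ψ t ≤ F t := by
    intro t ht
    rw [hψdef, hFdef]
    simp only
    rw [div_le_div_iff₀ ht ht]
    rw [inner_sub_right, inner_sub_right]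
    nlinarith [hkato t ht, hu_inner]
  -- φ bounded above
  set M : ℝ := (inner ℝ f v : ℝ) + b * (inner ℝ u u : ℝ) + 1 with hM
  have hGlim : Tendsto (fun t => F t - E t) (nhdsWithin 0 (Set.Ioi 0))
      (nhds ((inner ℝ f v : ℝ) + b * (inner ℝ u u : ℝ))) := by
    have := hF.sub hE
    have heq : (inner ℝ f v : ℝ) - (-b * (inner ℝ u u : ℝ))
        = (inner ℝ f v : ℝ) + b * (inner ℝ u u : ℝ) := by ring
    rwa [heq] at this
  have hGev : ∀ᶠ t in nhdsWithin (0:ℝ) (Set.Ioi 0), F t - E t < M := by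
    refine hGlim.eventually_lt_const ?_
    rw [hM]; linarith
  have hφev : ∀ᶠ t in nhdsWithin (0:ℝ) (Set.Ioi 0), φ t ≤ M := by
    filter_upwards [hGev, htne] with t h1 h2
    have := hψF t h2
    have h3 := hψφ t
    linarith
  obtain ⟨s₀, hs₀mem, hs₀p⟩ := (eventually_nhdsWithin_iff.mp hφev).exists_mem
  obtain ⟨ε, hε, hball⟩ := Metric.mem_nhds_iff.mp hs₀mem
  have hεbound : ∀ t : ℝ, 0 < t → t < ε → φ t ≤ M := by
    intro t ht htε
    refine hs₀p t (hball ?_) ht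
    rw [Metric.mem_ball, Real.dist_eq, sub_zero, abs_of_pos ht]
    exact htε
  have hbdd : BddAbove (φ '' Set.Ioi 0) := by
    refine ⟨M, ?_⟩
    rintro y ⟨x, hx, rfl⟩
    simp only [Set.mem_Ioi] at hx
    set w := min x (ε/2) with hw
    have hw0 : 0 < w := lt_min hx (by linarith)
    have hwε : w < ε := lt_of_le_of_lt (min_le_right _ _) (by linarith)
    calc φ x ≤ φ w := hφanti (Set.mem_Ioi.mpr hw0) (Set.mem_Ioi.mpr hx) (min_le_left _ _)
      _ ≤ M := hεbound w hw0 hwε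
  have hφlim : Tendsto φ (nhdsWithin 0 (Set.Ioi 0)) (nhds (sSup (φ '' Set.Ioi 0))) :=
    hφanti.tendsto_nhdsGT hbdd
  -- conclusion
  refine ⟨sSup (φ '' Set.Ioi 0) + (-b * (inner ℝ u u : ℝ)), ?_, ?_⟩
  · have h1 : Tendsto (fun t => φ t + E t) (nhdsWithin 0 (Set.Ioi 0))
        (nhds (sSup (φ '' Set.Ioi 0) + (-b * (inner ℝ u u : ℝ)))) := hφlim.add hE
    exact h1.congr (fun t => (hψφ t).symm)
  · have hψlim : Tendsto ψ (nhdsWithin 0 (Set.Ioi 0))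
        (nhds (sSup (φ '' Set.Ioi 0) + (-b * (inner ℝ u u : ℝ)))) := by
      have h1 := hφlim.add hE
      exact h1.congr (fun t => (hψφ t).symm)
    refine le_of_tendsto_of_tendsto hψlim hF ?_
    filter_upwards [htne] with t ht
    exact hψF t ht

end PartB

/-- For a semibounded self-adjoint operator `h` on `L²` with
positivity-preserving semigroup (form domain membership and form values being encoded via the
convergence of `t⁻¹⟨u, (1 - e^{-th})u⟩` as `t → 0⁺`):
(a) it does NOT follow in general that `0 ≤ f₁ ≤ f₂` (a.e.) with `f₁, f₂ ∈ Q(h)` implies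
`(f₁, h f₁) ≤ (f₂, h f₂)` — there is a counterexample (e.g. on `L²(ℝ)`);
(b) however, the diamagnetic-type inequality `(|f|, h |f|) ≤ ⟨f, h f⟩` holds for every
`f ∈ dom(h)` (encoded by norm convergence of `t⁻¹(f - e^{-th} f)` to `v = h f`). -/
theorem stmt17 :
    (∃ (H : HeatSemigroup (volume : Measure ℝ)) (f₁ f₂ : Lp ℝ 2 (volume : Measure ℝ))
        (q₁ q₂ : ℝ),
      0 ≤ f₁ ∧ f₁ ≤ f₂ ∧
      Tendsto (fun t : ℝ => (inner ℝ f₁ (f₁ - H.P t f₁) : ℝ) / t)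
        (nhdsWithin 0 (Set.Ioi 0)) (nhds q₁) ∧
      Tendsto (fun t : ℝ => (inner ℝ f₂ (f₂ - H.P t f₂) : ℝ) / t)
        (nhdsWithin 0 (Set.Ioi 0)) (nhds q₂) ∧
      q₂ < q₁) ∧
    (∀ {Q : Type} [MeasurableSpace Q] (μ : Measure Q) (_ : SigmaFinite μ)
        (H : HeatSemigroup μ) (f v : Lp ℝ 2 μ),
      Tendsto (fun t : ℝ => t⁻¹ • (f - H.P t f)) (nhdsWithin 0 (Set.Ioi 0)) (nhds v) →
      ∃ q : ℝ,
        Tendsto (fun t : ℝ => (inner ℝ |f| (|f| - H.P t |f|) : ℝ) / t)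
          (nhdsWithin 0 (Set.Ioi 0)) (nhds q) ∧
        q ≤ (inner ℝ f v : ℝ)) := by
  refine ⟨parta, ?_⟩
  intro Qt _ μ _ H f v hconv
  exact partb H f v hconv
end
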